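/- arXiv:2504.13464 — 8 statements merged into one kernel-verified Lean document; each statement's English description precedes it below -/
import Mathlib

section
/- Let X be a Banach space over 𝕂 (= ℝ or ℂ), let x, y ∈ X with ‖x‖ = ‖y‖ = 1, let ε ∈ [0,1), and let C ⊆ B_{X*} be a set whose weak*-closed convex hull equals B_{X*} (i.e. B_{X*} is the weak*-closure of the convex hull of C). Then x ⊥_B^ε y if and only if the convex hull of the set { L ∈ 𝕂 : there exists a sequence (x_n*) in C with x_n*(x) → 1 and x_n*(y) → L } has nonempty intersection with the disc D(ε) = { z ∈ 𝕂 : |z| ≤ ε }. -/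
/-!
The limit pairs `(lim φₙ x, lim φₙ y)` with `φₙ ∈ C` form a compact set `Q ⊆ 𝕜 × 𝕜`, and the set
of limits `L` in the statement is the slice `{L | (1, L) ∈ Q}`. Every `p ∈ Q` satisfies
`‖a p.1 + b p.2‖ ≤ ‖a • x + b • y‖`; with `a = 1` this and the convexity of discs give the easy
direction. Conversely, if the compact convex set `conv Q` missed `{1} × D(ε)`, a separating
functional `(a, b) ↦ a α + b β` would give `z = α • x + β • y` with `re (φ z) < u` on `C`, hence
`‖z‖ ≤ u` because `conv C` is weak*-dense in `B_{X*}`; its value at the point `(1, b)` with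
`b β = -ε ‖β‖` then contradicts the rescaled orthogonality `‖z‖ ≥ ‖α‖ - ε ‖β‖`. Finally, since
`re p.1 ≤ 1` on `Q`, a point of `conv Q` with first coordinate `1` is a convex combination of
points of `Q` on the face `p.1 = 1`.
-/

open Filter Topology Metric

section ConvexHull

variable {E : Type*} [AddCommGroup E] [Module ℝ E]

theorem convexHull_eq_biUnion_image_stdSimplex [FiniteDimensional ℝ E] (s : Set E) :
    convexHull ℝ s = ⋃ m ∈ Set.Iic (Module.finrank ℝ E + 1),
      (fun p : (Fin m → ℝ) × (Fin m → E) => ∑ i, p.1 i • p.2 i) ''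
        (stdSimplex ℝ (Fin m) ×ˢ Set.univ.pi fun _ => s) := by
  refine subset_antisymm (fun x hx => ?_) ?_
  · -- Carathéodory: affinely independent points, hence at most `finrank + 1` of them
    obtain ⟨ι, _, z, w, hzs, hz, hw0, hw1, rfl⟩ := eq_pos_convex_span_of_mem_convexHull hx
    let e := (Fintype.equivFin ι).symm
    refine Set.mem_biUnion (x := Fintype.card ι) ?_
      ⟨(w ∘ e, z ∘ e), ⟨⟨fun i => (hw0 _).le, ?_⟩, fun i _ => hzs (Set.mem_range_self _)⟩, ?_⟩
    · exact hz.card_le_finrank_succ.trans (Nat.succ_le_succ (Submodule.finrank_le _))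
    · exact (e.sum_comp w).trans hw1
    · exact e.sum_comp fun i => w i • z i
  · refine Set.iUnion₂_subset fun m _ => ?_
    rintro _ ⟨⟨w, z⟩, ⟨hw, hz⟩, rfl⟩
    exact mem_convexHull_of_exists_fintype w z hw.1 hw.2 (fun i => hz i (Set.mem_univ i)) rfl

theorem IsCompact.convexHull [TopologicalSpace E] [ContinuousAdd E] [ContinuousSMul ℝ E]
    [FiniteDimensional ℝ E] {s : Set E} (hs : IsCompact s) :
    IsCompact (convexHull ℝ s) := by
  rw [convexHull_eq_biUnion_image_stdSimplex]
  refine (Set.finite_Iic _).isCompact_biUnion fun m _ => ?_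
  exact ((isCompact_stdSimplex _ _).prod (isCompact_univ_pi fun _ => hs)).image (by fun_prop)

theorem mem_convexHull_inter_of_forall_le {s : Set E}
    {g : E →ₗ[ℝ] ℝ} {c : ℝ} (hs : ∀ q ∈ s, g q ≤ c) {p : E} (hp : p ∈ convexHull ℝ s)
    (hpc : g p = c) : p ∈ convexHull ℝ (s ∩ {q | g q = c}) := by
  obtain ⟨ι, _, w, z, hw0, hw1, hzs, rfl⟩ := mem_convexHull_iff_exists_fintype.1 hp
  have hslack : ∑ i, w i * (c - g (z i)) = 0 := by
    rw [← hpc, map_sum]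
    simp only [map_smul, smul_eq_mul, mul_sub, Finset.sum_sub_distrib, ← Finset.sum_mul, hw1,
      one_mul, sub_self]
  have hface (i) (hi : w i ≠ 0) : g (z i) = c := by
    have hterm := (Finset.sum_eq_zero_iff_of_nonneg fun j _ =>
      mul_nonneg (hw0 j) (sub_nonneg.2 (hs _ (hzs j)))).1 hslack i (Finset.mem_univ i)
    linarith [(mul_eq_zero.1 hterm).resolve_left hi]
  rw [← finsum_eq_sum_of_fintype]
  exact (convex_convexHull ℝ _).finsum_mem hw0 (by rwa [finsum_eq_sum_of_fintype])
    fun i hi => subset_convexHull ℝ _ ⟨hzs i, hface i hi⟩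

end ConvexHull

theorem RCLike.eq_one_of_re_eq_one_of_norm_le_one {𝕜 : Type*} [RCLike 𝕜] {z : 𝕜}
    (hre : RCLike.re z = 1) (hz : ‖z‖ ≤ 1) : z = 1 := by
  have hsq : ‖z‖ ^ 2 ≤ 1 := by nlinarith [norm_nonneg z]
  rw [RCLike.norm_sq_eq_def, hre] at hsq
  have him : RCLike.im z = 0 := by nlinarith [sq_nonneg (RCLike.im z)]
  exact RCLike.ext (by simp [hre]) (by simp [him])

theorem snd_mem_convexHull_of_mem_convexHull {𝕜 F : Type*} [RCLike 𝕜] [AddCommGroup F]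
    [Module ℝ F] {Q : Set (𝕜 × F)} (hQ : ∀ q ∈ Q, ‖q.1‖ ≤ 1) {p : 𝕜 × F}
    (hp : p ∈ convexHull ℝ Q) (hp1 : p.1 = 1) : p.2 ∈ convexHull ℝ {b | (1, b) ∈ Q} := by
  let g : 𝕜 × F →ₗ[ℝ] ℝ := RCLike.reLm.comp (LinearMap.fst ℝ 𝕜 F)
  have hface : p ∈ convexHull ℝ (Q ∩ {q | g q = 1}) :=
    mem_convexHull_inter_of_forall_le
      (fun q hq => (RCLike.re_le_norm q.1).trans (hQ q hq)) hp (by simp [g, hp1])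
  have hsub : Q ∩ {q | g q = 1} ⊆ {(1 : 𝕜)} ×ˢ {b | (1, b) ∈ Q} := by
    rintro ⟨a, b⟩ ⟨hq, hre⟩
    obtain rfl : a = 1 := RCLike.eq_one_of_re_eq_one_of_norm_le_one hre (hQ _ hq)
    exact ⟨rfl, hq⟩
  have := convexHull_mono hsub hface
  rw [convexHull_prod, convexHull_singleton] at this
  exact this.2

section BirkhoffJames

variable {𝕜 X : Type*} [RCLike 𝕜] [NormedAddCommGroup X] [NormedSpace 𝕜 X]

variable (𝕜) in
/-- `x ⊥_B^ε y`. -/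
def BirkhoffJamesOrthogonal (ε : ℝ) (x y : X) : Prop :=
  ∀ lam : 𝕜, ‖x‖ - ε * ‖lam • y‖ ≤ ‖x + lam • y‖

theorem BirkhoffJamesOrthogonal.norm_mul_norm_sub_le {ε : ℝ} {x y : X}
    (h : BirkhoffJamesOrthogonal 𝕜 ε x y) (hε : 0 ≤ ε) (α β : 𝕜) :
    ‖α‖ * ‖x‖ - ε * ‖β • y‖ ≤ ‖α • x + β • y‖ := by
  rcases eq_or_ne α 0 with rfl | hα
  · simp only [norm_zero, zero_mul, zero_smul, zero_add, zero_sub]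
    linarith [mul_nonneg hε (norm_nonneg (β • y)), norm_nonneg (β • y)]
  have hαβ : α • x + β • y = α • (x + (β / α) • y) := by
    rw [smul_add, smul_smul, mul_div_cancel₀ _ hα]
  have hdiv : ‖β • y‖ = ‖α‖ * ‖(β / α) • y‖ := by
    rw [← norm_smul, smul_smul, mul_div_cancel₀ _ hα]
  rw [hdiv, hαβ, norm_smul α]
  nlinarith [h (β / α), norm_nonneg α]

theorem norm_le_of_forall_re_apply_le {C : Set (StrongDual 𝕜 X)}
    (hC : StrongDual.toWeakDual '' closedBall 0 1 ⊆
      closure (StrongDual.toWeakDual '' convexHull ℝ C)) {z : X} {u : ℝ}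
    (h : ∀ φ ∈ C, RCLike.re (φ z) ≤ u) : ‖z‖ ≤ u := by
  have hhull : convexHull ℝ C ⊆ {φ : StrongDual 𝕜 X | RCLike.re (φ z) ≤ u} :=
    convexHull_min h <|
      convex_halfSpace_le ⟨fun φ ψ => by simp, fun c φ => by simp [RCLike.smul_re]⟩ u
  have hclosed : IsClosed {ψ : WeakDual 𝕜 X | RCLike.re (ψ z) ≤ u} :=
    isClosed_le (RCLike.continuous_re.comp (WeakDual.eval_continuous z)) continuous_const
  obtain ⟨g, hg, hgz⟩ := exists_dual_vector'' 𝕜 z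
  have := closure_minimal (Set.image_subset_iff.2 hhull) hclosed
    (hC ⟨g, mem_closedBall_zero_iff.2 hg, rfl⟩)
  simpa [hgz] using this

def limitPairs (C : Set (StrongDual 𝕜 X)) (x y : X) : Set (𝕜 × 𝕜) :=
  closure ((fun φ : StrongDual 𝕜 X => (φ x, φ y)) '' C)

variable {C : Set (StrongDual 𝕜 X)} {x y : X}

theorem mk_mem_limitPairs_iff {a b : 𝕜} :
    (a, b) ∈ limitPairs C x y ↔ ∃ φ : ℕ → StrongDual 𝕜 X, (∀ n, φ n ∈ C) ∧
      Tendsto (fun n => φ n x) atTop (𝓝 a) ∧ Tendsto (fun n => φ n y) atTop (𝓝 b) := by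
  simp only [limitPairs, mem_closure_iff_seq_limit, nhds_prod_eq, tendsto_prod_iff']
  constructor
  · rintro ⟨q, hq, hlim⟩
    choose φ hφC hφq using hq
    simp only [← hφq] at hlim
    exact ⟨φ, hφC, hlim⟩
  · rintro ⟨φ, hφC, hlim⟩
    exact ⟨_, fun n => ⟨φ n, hφC n, rfl⟩, hlim⟩

theorem norm_mul_add_mul_le_of_mem_limitPairs (hC : C ⊆ closedBall 0 1) {p : 𝕜 × 𝕜}
    (hp : p ∈ limitPairs C x y) (a b : 𝕜) : ‖a * p.1 + b * p.2‖ ≤ ‖a • x + b • y‖ := by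
  refine closure_minimal ?_
    (isClosed_le (f := fun p : 𝕜 × 𝕜 => ‖a * p.1 + b * p.2‖) (by fun_prop) continuous_const) hp
  rintro _ ⟨φ, hφ, rfl⟩
  have hφv := φ.le_of_opNorm_le (mem_closedBall_zero_iff.1 (hC hφ)) (a • x + b • y)
  simpa using hφv

theorem isCompact_limitPairs (hC : C ⊆ closedBall 0 1) : IsCompact (limitPairs C x y) := by
  refine isCompact_of_isClosed_isBounded isClosed_closure
    (isBounded_closedBall (x := 0) (r := max ‖x‖ ‖y‖) |>.subset fun p hp => ?_)
  have h1 := norm_mul_add_mul_le_of_mem_limitPairs hC hp 1 0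
  have h2 := norm_mul_add_mul_le_of_mem_limitPairs hC hp 0 1
  simp only [one_mul, zero_mul, add_zero, zero_add, one_smul, zero_smul] at h1 h2
  exact mem_closedBall_zero_iff.2 (norm_prod_le_iff.2 ⟨h1.trans (le_max_left _ _),
    h2.trans (le_max_right _ _)⟩)

variable {ε : ℝ}

theorem birkhoffJamesOrthogonal_of_mem_convexHull (hC : C ⊆ closedBall 0 1) (hx : ‖x‖ = 1)
    (hy : ‖y‖ = 1) {w : 𝕜} (hw : w ∈ convexHull ℝ {b | (1, b) ∈ limitPairs C x y})
    (hwε : ‖w‖ ≤ ε) : BirkhoffJamesOrthogonal 𝕜 ε x y := by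
  intro lam
  have hconv : Convex ℝ {b : 𝕜 | ‖1 + lam * b‖ ≤ ‖x + lam • y‖} := by
    have := (convex_closedBall (-1 : 𝕜) ‖x + lam • y‖).is_linear_preimage
      (f := fun b => lam * b) ⟨mul_add lam, fun c b => mul_smul_comm c lam b⟩
    simpa [Set.preimage, dist_eq_norm, add_comm] using this
  have hlam : ‖1 + lam * w‖ ≤ ‖x + lam • y‖ := convexHull_min (fun b hb => by
    simpa using norm_mul_add_mul_le_of_mem_limitPairs hC hb 1 lam) hconv hw
  have hrev := norm_sub_le (1 + lam * w) (lam * w)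
  rw [add_sub_cancel_right, norm_one, norm_mul] at hrev
  rw [hx, norm_smul, hy, mul_one]
  nlinarith [norm_nonneg lam]

theorem exists_mem_convexHull_limitPairs_of_birkhoffJamesOrthogonal (hC : C ⊆ closedBall 0 1)
    (hCball : StrongDual.toWeakDual '' closedBall 0 1 ⊆
      closure (StrongDual.toWeakDual '' convexHull ℝ C))
    (hx : ‖x‖ = 1) (hy : ‖y‖ = 1) (hε : 0 ≤ ε) (h : BirkhoffJamesOrthogonal 𝕜 ε x y) :
    (convexHull ℝ (limitPairs C x y) ∩ {1} ×ˢ closedBall 0 ε).Nonempty := by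
  by_contra hdisj
  obtain ⟨f, u, v, hfK, huv, hfT⟩ := RCLike.geometric_hahn_banach_compact_closed (𝕜 := 𝕜)
    (convex_convexHull ℝ _) (isCompact_limitPairs hC).convexHull
    ((convex_singleton _).prod (convex_closedBall _ _))
    (isClosed_singleton.prod isClosed_closedBall)
    (Set.disjoint_iff_inter_eq_empty.2 (Set.not_nonempty_iff_eq_empty.1 hdisj))
  set α := f (1, 0)
  set β := f (0, 1)
  have hf (a b : 𝕜) : f (a, b) = a * α + b * β := by
    rw [← smul_eq_mul a, ← smul_eq_mul b, ← map_smul, ← map_smul, ← map_add]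
    simp
  have hz : ‖α • x + β • y‖ ≤ u := norm_le_of_forall_re_apply_le hCball fun φ hφ => by
    have := hfK _ (subset_convexHull ℝ _ (subset_closure ⟨φ, hφ, rfl⟩))
    rw [hf] at this
    simpa [mul_comm] using this.le
  -- the point of `D(ε)` minimising `re (b * β)`
  obtain ⟨b, hb, hbβ⟩ : ∃ b : 𝕜, ‖b‖ ≤ ε ∧ b * β = -(ε * ‖β‖ : ℝ) := by
    rcases eq_or_ne β 0 with hβ | hβ
    · exact ⟨0, by simpa using hε, by simp [hβ]⟩
    · refine ⟨-((ε * ‖β‖ : ℝ) / β), ?_, by field_simp⟩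
      rw [norm_neg, norm_div, RCLike.norm_ofReal, abs_of_nonneg (by positivity),
        mul_div_cancel_right₀ _ (norm_ne_zero_iff.2 hβ)]
  have hT := hfT (1, b) ⟨rfl, mem_closedBall_zero_iff.2 hb⟩
  rw [hf, one_mul, hbβ, map_add, map_neg, RCLike.ofReal_re] at hT
  have horth := h.norm_mul_norm_sub_le hε α β
  rw [hx, norm_smul, hy] at horth
  linarith [RCLike.re_le_norm α]

end BirkhoffJames

theorem approx_BJ_orthogonality_via_weakStar_dense_subset_general
    {𝕜 X : Type*} [RCLike 𝕜] [NormedAddCommGroup X] [NormedSpace 𝕜 X]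
    (x y : X) (hx : ‖x‖ = 1) (hy : ‖y‖ = 1)
    (ε : ℝ) (hε0 : 0 ≤ ε)
    (C : Set (StrongDual 𝕜 X)) (hC : C ⊆ closedBall (0 : StrongDual 𝕜 X) 1)
    (hCball : closure ((fun φ => StrongDual.toWeakDual φ) '' (convexHull ℝ C)) =
      (fun φ => StrongDual.toWeakDual φ) '' (closedBall (0 : StrongDual 𝕜 X) 1)) :
    (∀ lam : 𝕜, ‖x‖ - ε * ‖lam • y‖ ≤ ‖x + lam • y‖) ↔
      (convexHull ℝ {L : 𝕜 | ∃ φ : ℕ → StrongDual 𝕜 X, (∀ n, φ n ∈ C) ∧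
            Tendsto (fun n => φ n x) atTop (𝓝 (1 : 𝕜)) ∧
            Tendsto (fun n => φ n y) atTop (𝓝 L)} ∩
          {z : 𝕜 | ‖z‖ ≤ ε}).Nonempty := by
  simp only [← mk_mem_limitPairs_iff]
  refine ⟨fun h => ?_, fun ⟨w, hw, hwε⟩ =>
    birkhoffJamesOrthogonal_of_mem_convexHull hC hx hy hw hwε⟩
  obtain ⟨⟨a, b⟩, hp, rfl, hb⟩ :=
    exists_mem_convexHull_limitPairs_of_birkhoffJamesOrthogonal hC hCball.ge hx hy hε0 h
  refine ⟨b, snd_mem_convexHull_of_mem_convexHull (fun q hq => ?_) hp rfl,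
    mem_closedBall_zero_iff.1 hb⟩
  simpa [hx] using norm_mul_add_mul_le_of_mem_limitPairs hC hq 1 0

/-- Let `X` be a Banach space over `𝕜` (= ℝ or ℂ), `x, y` unit vectors,
`ε ∈ [0,1)`, and `C ⊆ B_{X*}` with weak*-closed convex hull equal to `B_{X*}`.
Then `x ⊥_B^ε y` iff the convex hull of the set of limits `L = lim xₙ*(y)` over sequences
`(xₙ*)` in `C` with `xₙ*(x) → 1` meets the disc `D(ε)`. -/
theorem approx_BJ_orthogonality_via_weakStar_dense_subset
    {𝕜 X : Type*} [RCLike 𝕜] [NormedAddCommGroup X] [NormedSpace 𝕜 X] [CompleteSpace X]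
    (x y : X) (hx : ‖x‖ = 1) (hy : ‖y‖ = 1)
    (ε : ℝ) (hε0 : 0 ≤ ε) (hε1 : ε < 1)
    (C : Set (StrongDual 𝕜 X)) (hC : C ⊆ closedBall (0 : StrongDual 𝕜 X) 1)
    (hCball : closure ((fun φ => StrongDual.toWeakDual φ) '' (convexHull ℝ C)) =
      (fun φ => StrongDual.toWeakDual φ) '' (closedBall (0 : StrongDual 𝕜 X) 1)) :
    (∀ lam : 𝕜, ‖x‖ - ε * ‖lam • y‖ ≤ ‖x + lam • y‖) ↔
      (convexHull ℝ {L : 𝕜 | ∃ φ : ℕ → StrongDual 𝕜 X, (∀ n, φ n ∈ C) ∧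
            Tendsto (fun n => φ n x) atTop (𝓝 (1 : 𝕜)) ∧
            Tendsto (fun n => φ n y) atTop (𝓝 L)} ∩
          {z : 𝕜 | ‖z‖ ≤ ε}).Nonempty :=
  approx_BJ_orthogonality_via_weakStar_dense_subset_general x y hx hy ε hε0 C hC hCball
end

section
/- Let Y be a finite-dimensional polyhedral linear subspace of a real Banach space X, and suppose Y is strongly anti-coproximinal in X. Then: (i) for any two distinct maximal faces F₁, F₂ of B_X, one has F₁ ∩ Y ≠ F₂ ∩ Y; and (ii) X is a finite-dimensional polyhedral Banach space. -/
/-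
Strong anti-coproximinality gives, for a unit vector `x` and `ε < 1`, a unit `w ∈ Y` all of whose
support functionals `g` satisfy `g x > ε`. Since `B_Y` is the convex hull of finitely many extreme
points, the support functionals of a unit `w ∈ Y` are exactly the functionals of norm `≤ 1` equal to
`1` on the extreme points carrying `w`, so only finitely many such sets occur. Taking `ε` above the
finitely many values `g x < 1` shows that every unit `x ∈ X` has a unit `w ∈ Y` whose support
functionals all support `x`. One functional from each of these finitely many sets gives a finite
family `G` with `B_X = ⋂_{g ∈ G} {g ≤ 1}`; hence `X` is finite-dimensional, and an extreme point of
`B_X` is determined by the set of `g ∈ G` it makes equal to `1`.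
For (i), let `x` be in the relative interior of `F₁` and `w` as above: the face exposed by a support
functional of `w` contains `x`, hence equals `F₁`, so `w ∈ F₁ ∩ Y = F₂ ∩ Y`. A functional exposing
`F₂` then supports `w`, hence `x`, and maximality forces `F₁ = F₂`.
-/

open Filter Topology Metric Set

/-- `F` is a face of the closed unit ball of the real Banach space `X`. -/
def IsFaceOfBall {X : Type*} [NormedAddCommGroup X] [NormedSpace ℝ X] (F : Set X) : Prop :=
  (F ⊆ {x | ‖x‖ = 1}) ∧
  (∀ u ∈ F, ∀ v ∈ F, ∀ t : ℝ, 0 ≤ t → t ≤ 1 → (1 - t) • u + t • v ∈ F) ∧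
  (∀ u v : X, ‖u‖ ≤ 1 → ‖v‖ ≤ 1 → (2⁻¹ : ℝ) • (u + v) ∈ F → u ∈ F ∧ v ∈ F)

/-- `F` is a maximal face of the closed unit ball. -/
def IsMaximalFaceOfBall {X : Type*} [NormedAddCommGroup X] [NormedSpace ℝ X]
    (F : Set X) : Prop :=
  IsFaceOfBall F ∧ ∀ F' : Set X, IsFaceOfBall F' → F ⊆ F' → F' = F

/-- `S` is strongly anti-coproximinal (real scalars). -/
def StronglyAntiCoproximinal {X : Type*} [NormedAddCommGroup X] [NormedSpace ℝ X]
    (S : Set X) : Prop :=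
  ∀ x : X, x ≠ 0 → ∀ ε : ℝ, 0 ≤ ε → ε < 1 →
    ∃ y ∈ S, ¬ ∀ lam : ℝ, ‖y‖ - ε * ‖lam • x‖ ≤ ‖y + lam • x‖

section ConvexGeometry

variable {V : Type*} [AddCommGroup V] [Module ℝ V]

theorem Finset.exists_subset_forall_apply_eq_one_iff {E : Finset V} {w : V}
    (hw : w ∈ convexHull ℝ (E : Set V)) :
    ∃ A ⊆ E, ∀ f : V →ₗ[ℝ] ℝ, (∀ p ∈ E, f p ≤ 1) → (f w = 1 ↔ ∀ p ∈ A, f p = 1) := by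
  classical
  obtain ⟨c, hc0, hc1, rfl⟩ := Finset.mem_convexHull'.mp hw
  refine ⟨E.filter (0 < c ·), Finset.filter_subset _ _, fun f hf => ?_⟩
  have key : ∑ p ∈ E, c p * f p = ∑ p ∈ E, c p ↔ ∀ p ∈ E, c p * f p = c p :=
    Finset.sum_eq_sum_iff_of_le fun p hp => mul_le_of_le_one_right (hc0 p hp) (hf p hp)
  rw [hc1] at key
  simp only [map_sum, map_smul, smul_eq_mul, key, Finset.mem_filter, and_imp]
  refine forall₂_congr fun p hp => ?_
  rw [mul_right_eq_self₀, (hc0 p hp).lt_iff_ne', or_iff_not_imp_right]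

theorem finite_extremePoints_setOf_forall_apply_le_one {F : Type*} [FunLike F V ℝ]
    [LinearMapClass F ℝ V ℝ] {G : Set F} (hG : G.Finite) :
    (extremePoints ℝ {v | ∀ g ∈ G, g v ≤ 1}).Finite := by
  refine Set.Finite.of_injOn (f := fun e => {g ∈ G | g e = 1}) (t := {A | A ⊆ G})
    (fun e _ => sep_subset _ _) ?_ hG.finite_subsets
  intro e₁ he₁ e₂ _ hact
  have hd : ∀ g ∈ G, g e₁ = 1 → g (e₁ - e₂) = 0 := fun g hg h₁ => by
    have h₂ : g ∈ {g ∈ G | g e₂ = 1} := by simp only at hact; exact hact ▸ ⟨hg, h₁⟩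
    rw [map_sub, h₁, h₂.2, sub_self]
  have hev : ∀ᶠ t in 𝓝 (0 : ℝ), e₁ + t • (e₁ - e₂) ∈ {v | ∀ g ∈ G, g v ≤ 1} := by
    simp only [mem_ofPred_eq, hG.eventually_all, map_add, map_smul, smul_eq_mul]
    intro g hg
    rcases (he₁.1 g hg).lt_or_eq with hlt | heq
    · have hcont : Continuous fun t : ℝ => g e₁ + t * g (e₁ - e₂) := by fun_prop
      exact (hcont.tendsto' 0 _ (by simp)).eventually (eventually_le_nhds hlt)
    · exact Eventually.of_forall fun t => by simp [heq, hd g hg heq]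
  have hev' := (continuous_neg.tendsto' (0 : ℝ) 0 neg_zero).eventually hev
  obtain ⟨t, ht, hplus, hminus⟩ := (hev.and hev').exists_gt
  have hmid : e₁ ∈ openSegment ℝ (e₁ + t • (e₁ - e₂)) (e₁ + (-t) • (e₁ - e₂)) :=
    ⟨1/2, 1/2, by norm_num, by norm_num, by norm_num, by module⟩
  have := ((mem_extremePoints.mp he₁).2 _ hplus _ hminus hmid).1
  rw [add_eq_left, smul_eq_zero, sub_eq_zero] at this
  exact this.resolve_left ht.ne'

end ConvexGeometry

theorem convexHull_extremePoints_eq_of_finite {V : Type*} [NormedAddCommGroup V]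
    [NormedSpace ℝ V] {s : Set V} (hsc : IsCompact s) (hs : Convex ℝ s)
    (hfin : (extremePoints ℝ s).Finite) : convexHull ℝ (extremePoints ℝ s) = s :=
  (hfin.isClosed_convexHull ℝ).closure_eq.symm.trans (closure_convexHull_extremePoints hsc hs)

theorem FiniteDimensional.of_finite_separating {K V F : Type*} [Field K] [AddCommGroup V]
    [Module K V] [FunLike F V K] [LinearMapClass F K V K] {G : Set F} (hG : G.Finite)
    (hsep : ∀ x ≠ 0, ∃ g ∈ G, g x ≠ 0) : FiniteDimensional K V := by
  have := hG.to_subtype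
  refine FiniteDimensional.of_injective (LinearMap.pi fun g : G => (g.1 : V →ₗ[K] K)) ?_
  rw [← LinearMap.ker_eq_bot, LinearMap.ker_eq_bot']
  intro x hx
  by_contra h
  obtain ⟨g, hg, hgx⟩ := hsep x h
  exact hgx (congrFun hx ⟨g, hg⟩)

section Intrinsic

variable {V : Type*} [AddCommGroup V] [Module ℝ V] [TopologicalSpace V]
  [IsTopologicalAddGroup V] [ContinuousSMul ℝ V]

theorem exists_one_lt_lineMap_mem_of_mem_intrinsicInterior {s : Set V} {x z : V}
    (hx : x ∈ intrinsicInterior ℝ s) (hz : z ∈ s) :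
    ∃ t > (1 : ℝ), AffineMap.lineMap z x t ∈ s := by
  obtain ⟨y, hy, rfl⟩ := mem_intrinsicInterior.mp hx
  let φ : ℝ → affineSpan ℝ s := fun t =>
    ⟨AffineMap.lineMap z (y : V) t, AffineMap.lineMap_mem t (subset_affineSpan ℝ s hz) y.2⟩
  have hφ : Continuous φ := AffineMap.lineMap_continuous.subtype_mk _
  have hφ1 : φ 1 = y := Subtype.ext (AffineMap.lineMap_apply_one _ _)
  obtain ⟨t, ht, hts⟩ := ((hφ.tendsto' 1 y hφ1).eventually_mem
    (isOpen_interior.mem_nhds hy)).exists_gt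
  exact ⟨t, ht, (interior_subset hts : φ t ∈ (↑) ⁻¹' s)⟩

theorem IsMaxOn.apply_eq_of_mem_intrinsicInterior {F : Type*} [FunLike F V ℝ]
    [LinearMapClass F ℝ V ℝ] {f : F} {s : Set V} {x z : V} (hf : IsMaxOn f s x)
    (hx : x ∈ intrinsicInterior ℝ s) (hz : z ∈ s) : f z = f x := by
  obtain ⟨t, ht, hts⟩ := exists_one_lt_lineMap_mem_of_mem_intrinsicInterior hx hz
  have h₁ := isMaxOn_iff.mp hf _ hts
  have h₂ := isMaxOn_iff.mp hf _ hz
  rw [AffineMap.lineMap_apply_module, map_add, map_smul, map_smul, smul_eq_mul,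
    smul_eq_mul] at h₁
  nlinarith

end Intrinsic

section DualBall

variable {X : Type*} [NormedAddCommGroup X] [NormedSpace ℝ X]

def supportFunctionals (x : X) : Set (X →L[ℝ] ℝ) := {g | ‖g‖ ≤ 1 ∧ g x = 1}

theorem apply_le_norm_of_norm_le_one {g : X →L[ℝ] ℝ} (hg : ‖g‖ ≤ 1) (v : X) : g v ≤ ‖v‖ :=
  (le_abs_self _).trans (by simpa using g.le_of_opNorm_le hg v)

theorem supportFunctionals_nonempty {x : X} (hx : ‖x‖ = 1) : (supportFunctionals x).Nonempty :=
  let ⟨g, hg, hgx⟩ := exists_dual_vector'' ℝ x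
  ⟨g, hg, by simpa [hx] using hgx⟩

theorem isFaceOfBall_setOf_apply_eq_one {g : X →L[ℝ] ℝ} (hg : ‖g‖ ≤ 1) :
    IsFaceOfBall {v : X | ‖v‖ = 1 ∧ g v = 1} := by
  have hnorm {v : X} (hv : ‖v‖ ≤ 1) (hgv : g v = 1) : ‖v‖ = 1 :=
    hv.antisymm (hgv ▸ apply_le_norm_of_norm_le_one hg v)
  refine ⟨fun v hv => hv.1, fun u hu v hv t ht₀ ht₁ => ?_, fun u v hu hv hmid => ?_⟩
  · have hgt : g ((1 - t) • u + t • v) = 1 := by simp [hu.2, hv.2]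
    have hball : (1 - t) • u + t • v ∈ closedBall (0 : X) 1 :=
      convex_closedBall 0 1 (mem_closedBall_zero_iff.mpr hu.1.le)
        (mem_closedBall_zero_iff.mpr hv.1.le) (by linarith) ht₀ (by ring)
    exact ⟨hnorm (mem_closedBall_zero_iff.mp hball) hgt, hgt⟩
  · have hgu := (apply_le_norm_of_norm_le_one hg u).trans hu
    have hgv := (apply_le_norm_of_norm_le_one hg v).trans hv
    have hsum : g u + g v = 2 := by
      have := hmid.2
      simp only [map_smul, map_add, smul_eq_mul] at this
      linarith
    exact ⟨⟨hnorm hu (by linarith), by linarith⟩, ⟨hnorm hv (by linarith), by linarith⟩⟩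

theorem IsFaceOfBall.convex {F : Set X} (hF : IsFaceOfBall F) : Convex ℝ F :=
  fun u hu v hv a b ha hb hab => by
    simpa [← hab] using hF.2.1 u hu v hv b hb (by linarith)

theorem IsMaximalFaceOfBall.eq_setOf_apply_eq_one {F : Set X} (hF : IsMaximalFaceOfBall F)
    {x : X} (hx : x ∈ intrinsicInterior ℝ F) {g : X →L[ℝ] ℝ} (hg : g ∈ supportFunctionals x) :
    F = {v | ‖v‖ = 1 ∧ g v = 1} := by
  have hmax : IsMaxOn g F x := isMaxOn_iff.mpr fun z hz =>
    hg.2 ▸ (apply_le_norm_of_norm_le_one hg.1 z).trans (hF.1.1 hz).le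
  refine (hF.2 _ (isFaceOfBall_setOf_apply_eq_one hg.1) fun z hz => ⟨hF.1.1 hz, ?_⟩).symm
  exact (hmax.apply_eq_of_mem_intrinsicInterior hx hz).trans hg.2

theorem closedBall_eq_setOf_forall_apply_le_one {G : Set (X →L[ℝ] ℝ)} (hG : ∀ g ∈ G, ‖g‖ ≤ 1)
    (hnorming : ∀ x, ‖x‖ = 1 → ∃ g ∈ G, g x = 1) :
    closedBall (0 : X) 1 = {v | ∀ g ∈ G, g v ≤ 1} := by
  ext v
  refine ⟨fun hv g hg => (apply_le_norm_of_norm_le_one (hG g hg) v).trans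
    (mem_closedBall_zero_iff.mp hv), fun hv => ?_⟩
  refine mem_closedBall_zero_iff.mpr (not_lt.mp fun hlt => ?_)
  have hpos : 0 < ‖v‖ := one_pos.trans hlt
  obtain ⟨g, hg, hgv⟩ := hnorming (‖v‖⁻¹ • v) (norm_smul_inv_norm (norm_pos_iff.mp hpos))
  rw [map_smul, smul_eq_mul, inv_mul_eq_one₀ hpos.ne'] at hgv
  linarith [hv g hg]

end DualBall

section AntiCoproximinal

variable {X : Type*} [NormedAddCommGroup X] [NormedSpace ℝ X]

theorem StronglyAntiCoproximinal.exists_lt_apply {Y : Submodule ℝ X}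
    (hY : StronglyAntiCoproximinal (Y : Set X))
    {x : X} (hx : x ≠ 0) {ε : ℝ} (hε₀ : 0 ≤ ε) (hε₁ : ε < 1) :
    ∃ w ∈ Y, ‖w‖ = 1 ∧ ∀ g ∈ supportFunctionals w, ε * ‖x‖ < g x := by
  obtain ⟨y, hyY, hy⟩ := hY x hx ε hε₀ hε₁
  push Not at hy
  obtain ⟨lam, hlam⟩ := hy
  have hlam0 : lam ≠ 0 := by rintro rfl; simp at hlam
  obtain ⟨u, rfl⟩ : ∃ u, y = lam • u := ⟨lam⁻¹ • y, by simp [hlam0]⟩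
  have hu : ‖u + x‖ < ‖u‖ - ε * ‖x‖ := by
    rw [← smul_add, norm_smul, norm_smul, norm_smul] at hlam
    have := norm_pos_iff.mpr hlam0
    nlinarith
  have hu0 : 0 < ‖u‖ := by nlinarith [norm_nonneg (u + x), norm_nonneg x]
  refine ⟨-‖u‖⁻¹ • u, Y.smul_mem _ ((Y.smul_mem_iff hlam0).mp hyY),
    by simp [norm_smul, hu0.ne'], ?_⟩
  rintro g ⟨hg, hgw⟩
  have hgu : g u = -‖u‖ := by
    simp only [map_smul, smul_eq_mul] at hgw
    field_simp at hgw
    linarith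
  have := apply_le_norm_of_norm_le_one hg (-(u + x))
  rw [norm_neg, map_neg, map_add, hgu] at this
  linarith

variable (Y : Submodule ℝ X) [FiniteDimensional ℝ Y]

theorem finite_image_supportFunctionals
    (hYpoly : (extremePoints ℝ (closedBall (0 : Y) 1)).Finite) :
    ((fun w : Y => supportFunctionals (w : X)) '' sphere 0 1).Finite := by
  set E := hYpoly.toFinset
  refine ((E.powerset : Set (Finset Y)).toFinite.image
    fun A => {g : X →L[ℝ] ℝ | ‖g‖ ≤ 1 ∧ ∀ p : Y, p ∈ A → g p = 1}).subset ?_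
  rintro _ ⟨w, hw, rfl⟩
  have hwE : w ∈ convexHull ℝ (E : Set Y) := by
    rw [hYpoly.coe_toFinset, convexHull_extremePoints_eq_of_finite (isCompact_closedBall _ _)
      (convex_closedBall _ _) hYpoly]
    exact sphere_subset_closedBall hw
  obtain ⟨A, hAE, hA⟩ := E.exists_subset_forall_apply_eq_one_iff hwE
  refine ⟨A, Finset.mem_coe.mpr (Finset.mem_powerset.mpr hAE), ?_⟩
  ext g
  refine and_congr_right fun hg => (hA ((g : X →ₗ[ℝ] ℝ) ∘ₗ Y.subtype) fun p hp => ?_).symm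
  have hp : p ∈ closedBall (0 : Y) 1 := extremePoints_subset (hYpoly.mem_toFinset.mp hp)
  exact (apply_le_norm_of_norm_le_one hg _).trans (mem_closedBall_zero_iff.mp hp)

theorem exists_supportFunctionals_subset
    (hYpoly : (extremePoints ℝ (closedBall (0 : Y) 1)).Finite)
    (hY : StronglyAntiCoproximinal (Y : Set X)) {x : X} (hx : ‖x‖ = 1) :
    ∃ w ∈ Y, ‖w‖ = 1 ∧ supportFunctionals w ⊆ supportFunctionals x := by
  by_contra! hbad
  have hev : ∀ᶠ ε in 𝓝[<] (1 : ℝ), (0 ≤ ε ∧ ε < 1) ∧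
      ∀ S ∈ (fun w : Y => supportFunctionals (w : X)) '' sphere 0 1, ∃ g ∈ S, g x ≤ ε := by
    refine (((eventually_ge_nhds one_pos).filter_mono nhdsWithin_le_nhds).and
      self_mem_nhdsWithin).and ?_
    rw [(finite_image_supportFunctionals Y hYpoly).eventually_all]
    rintro _ ⟨w, hw, rfl⟩
    obtain ⟨g, hgw, hgx⟩ := not_subset.mp (hbad w w.2 (by simpa using hw))
    have hlt : g x < 1 := ((apply_le_norm_of_norm_le_one hgw.1 x).trans_eq hx).lt_of_ne
      fun h => hgx ⟨hgw.1, h⟩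
    exact ((eventually_ge_nhds hlt).filter_mono nhdsWithin_le_nhds).mono fun ε hε => ⟨g, hgw, hε⟩
  obtain ⟨ε, ⟨hε₀, hε₁⟩, hε⟩ := hev.exists
  obtain ⟨w, hwY, hw, hgt⟩ := hY.exists_lt_apply (norm_ne_zero_iff.mp (hx ▸ one_ne_zero)) hε₀ hε₁
  obtain ⟨g, hg, hgx⟩ := hε _ ⟨⟨w, hwY⟩, by simpa using hw, rfl⟩
  have := hgt g hg
  rw [hx, mul_one] at this
  linarith

theorem exists_finite_norming_set
    (hYpoly : (extremePoints ℝ (closedBall (0 : Y) 1)).Finite)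
    (hY : StronglyAntiCoproximinal (Y : Set X)) :
    ∃ G : Set (X →L[ℝ] ℝ), G.Finite ∧ (∀ g ∈ G, ‖g‖ ≤ 1) ∧
      ∀ x : X, ‖x‖ = 1 → ∃ g ∈ G, g x = 1 := by
  set 𝒩 := (fun w : Y => supportFunctionals (w : X)) '' sphere 0 1
  have hmem : ∀ S ∈ 𝒩, Classical.epsilon (· ∈ S) ∈ S := by
    rintro _ ⟨w, hw, rfl⟩
    exact Classical.epsilon_spec (supportFunctionals_nonempty (by simpa using hw))
  refine ⟨(fun S => Classical.epsilon (· ∈ S)) '' 𝒩,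
    (finite_image_supportFunctionals Y hYpoly).image _, ?_, fun x hx => ?_⟩
  · rintro _ ⟨_, ⟨w, hw, rfl⟩, rfl⟩
    exact (hmem _ ⟨w, hw, rfl⟩).1
  · obtain ⟨w, hwY, hw, hsub⟩ := exists_supportFunctionals_subset Y hYpoly hY hx
    have hS : supportFunctionals w ∈ 𝒩 := ⟨⟨w, hwY⟩, by simpa using hw, rfl⟩
    exact ⟨_, ⟨_, hS, rfl⟩, (hsub (hmem _ hS)).2⟩

theorem IsMaximalFaceOfBall.eq_of_inter_eq [FiniteDimensional ℝ X]
    (hYpoly : (extremePoints ℝ (closedBall (0 : Y) 1)).Finite)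
    (hY : StronglyAntiCoproximinal (Y : Set X)) {F₁ F₂ : Set X}
    (h₁ : IsMaximalFaceOfBall F₁) (h₂ : IsMaximalFaceOfBall F₂)
    (heq : F₁ ∩ (Y : Set X) = F₂ ∩ (Y : Set X)) : F₁ = F₂ := by
  rcases F₁.eq_empty_or_nonempty with rfl | hne₁
  · exact (h₁.2 F₂ h₂.1 (empty_subset _)).symm
  rcases F₂.eq_empty_or_nonempty with rfl | hne₂
  · exact h₂.2 F₁ h₁.1 (empty_subset _)
  obtain ⟨x₁, hx₁⟩ := hne₁.intrinsicInterior h₁.1.convex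
  obtain ⟨x₂, hx₂⟩ := hne₂.intrinsicInterior h₂.1.convex
  obtain ⟨w, hwY, hw, hsub⟩ :=
    exists_supportFunctionals_subset Y hYpoly hY (h₁.1.1 (intrinsicInterior_subset hx₁))
  obtain ⟨g₁, hg₁⟩ := supportFunctionals_nonempty hw
  have hwF₁ : w ∈ F₁ := by
    rw [h₁.eq_setOf_apply_eq_one hx₁ (hsub hg₁)]
    exact ⟨hw, hg₁.2⟩
  have hwF₂ : w ∈ F₂ := (heq ▸ ⟨hwF₁, hwY⟩ : w ∈ F₂ ∩ Y).1
  obtain ⟨g₂, hg₂⟩ := supportFunctionals_nonempty (h₂.1.1 (intrinsicInterior_subset hx₂))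
  have hF₂ := h₂.eq_setOf_apply_eq_one hx₂ hg₂
  rw [hF₂] at hwF₂
  have hg₂w : g₂ ∈ supportFunctionals w := ⟨hg₂.1, hwF₂.2⟩
  rw [h₁.eq_setOf_apply_eq_one hx₁ (hsub hg₂w), hF₂]

end AntiCoproximinal

theorem polyhedral_of_stronglyAntiCoproximinal_polyhedral_subspace_general
    {X : Type*} [NormedAddCommGroup X] [NormedSpace ℝ X]
    (Y : Submodule ℝ X) [FiniteDimensional ℝ Y]
    (hYpoly : (extremePoints ℝ (closedBall (0 : Y) 1)).Finite)
    (hY : StronglyAntiCoproximinal (Y : Set X)) :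
    (∀ F₁ F₂ : Set X, IsMaximalFaceOfBall F₁ → IsMaximalFaceOfBall F₂ → F₁ ≠ F₂ →
      F₁ ∩ (Y : Set X) ≠ F₂ ∩ (Y : Set X)) ∧
    (FiniteDimensional ℝ X ∧ (extremePoints ℝ (closedBall (0 : X) 1)).Finite) := by
  obtain ⟨G, hG, hG₁, hnorming⟩ := exists_finite_norming_set Y hYpoly hY
  have : FiniteDimensional ℝ X := FiniteDimensional.of_finite_separating hG fun x hx => by
    obtain ⟨g, hg, hgx⟩ := hnorming (‖x‖⁻¹ • x) (norm_smul_inv_norm hx)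
    exact ⟨g, hg, fun h => by simp [h] at hgx⟩
  refine ⟨fun F₁ F₂ h₁ h₂ hne heq => hne (h₁.eq_of_inter_eq Y hYpoly hY h₂ heq), this, ?_⟩
  rw [closedBall_eq_setOf_forall_apply_le_one hG₁ hnorming]
  exact finite_extremePoints_setOf_forall_apply_le_one hG

/-- If `Y` is a finite-dimensional polyhedral subspace of a real Banach
space `X` which is strongly anti-coproximinal, then (i) distinct maximal faces of `B_X` have
distinct intersections with `Y`, and (ii) `X` is finite-dimensional and polyhedral. -/
theorem polyhedral_of_stronglyAntiCoproximinal_polyhedral_subspace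
    {X : Type*} [NormedAddCommGroup X] [NormedSpace ℝ X] [CompleteSpace X]
    (Y : Submodule ℝ X) [FiniteDimensional ℝ Y]
    (hYpoly : (extremePoints ℝ (closedBall (0 : Y) 1)).Finite)
    (hY : StronglyAntiCoproximinal (Y : Set X)) :
    (∀ F₁ F₂ : Set X, IsMaximalFaceOfBall F₁ → IsMaximalFaceOfBall F₂ → F₁ ≠ F₂ →
      F₁ ∩ (Y : Set X) ≠ F₂ ∩ (Y : Set X)) ∧
    (FiniteDimensional ℝ X ∧ (extremePoints ℝ (closedBall (0 : X) 1)).Finite) :=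
  polyhedral_of_stronglyAntiCoproximinal_polyhedral_subspace_general Y hYpoly hY
end

section
/- Let X = ℓ∞(ℝ) be the Banach space of all bounded real sequences with the supremum norm. Then no finite-dimensional polyhedral linear subspace of X is anti-coproximinal in X; that is, for every finite-dimensional subspace Y of X whose closed unit ball has only finitely many extreme points, there exists a nonzero x ∈ X such that y ⊥_B x for every y ∈ Y. -/
open Metric Set ENNReal

/-!
If some coordinate `n` is a strict peak of no `y ∈ Y` (some other coordinate of `y` is at least
as large in modulus), then changing coordinate `n` cannot decrease the sup norm, so the unit
vector `e_n` is orthogonal to `Y`. Otherwise normalising a peak at each `n` gives `z_n` in the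
unit ball `B` of `Y` with `z_n n = 1` and `|z_n m| < 1` for `m ≠ n`, so the faces of `B` exposed
by the coordinate functionals are pairwise distinct. But by Krein–Milman each exposed face of a
polytope is the convex hull of the extreme points it contains, so there are only finitely many.
-/

section ExposedFaces

variable {E : Type*} [AddCommGroup E] [Module ℝ E] [TopologicalSpace E] [T2Space E]
  [IsTopologicalAddGroup E] [ContinuousSMul ℝ E] [LocallyConvexSpace ℝ E] {A B : Set E}

theorem IsExposed.eq_convexHull_inter_extremePoints (hB : IsExposed ℝ A B) (hAc : IsCompact A)
    (hAcv : Convex ℝ A) (hAext : (A.extremePoints ℝ).Finite) :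
    B = convexHull ℝ (B ∩ A.extremePoints ℝ) := by
  have hfin : (B ∩ A.extremePoints ℝ).Finite := hAext.subset inter_subset_right
  rw [← (hfin.isClosed_convexHull ℝ).closure_eq, ← hB.isExtreme.extremePoints_eq,
    closure_convexHull_extremePoints (hB.isCompact hAc) (hB.convex hAcv)]

theorem Set.Finite.setOf_isExposed (hAc : IsCompact A) (hAcv : Convex ℝ A)
    (hAext : (A.extremePoints ℝ).Finite) : {B | IsExposed ℝ A B}.Finite := by
  refine (hAext.finite_subsets.image (convexHull ℝ)).subset fun B hB => ?_
  exact ⟨B ∩ A.extremePoints ℝ, inter_subset_right,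
    (IsExposed.eq_convexHull_inter_extremePoints hB hAc hAcv hAext).symm⟩

end ExposedFaces

namespace lp

variable {ι : Type*} {E : ι → Type*} [∀ i, NormedAddCommGroup (E i)]

def IsStrictPeak (f : lp E ∞) (i : ι) : Prop :=
  ∀ j ≠ i, ‖f j‖ < ‖f i‖

theorem IsStrictPeak.norm_eq {f : lp E ∞} {i : ι} (hf : IsStrictPeak f i) : ‖f‖ = ‖f i‖ := by
  refine le_antisymm (norm_le_of_forall_le (norm_nonneg _) fun j => ?_)
    (norm_apply_le_norm top_ne_zero f i)
  obtain rfl | hj := eq_or_ne j i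
  exacts [le_rfl, (hf j hj).le]

theorem IsStrictPeak.apply_ne_zero [Nontrivial ι] {f : lp E ∞} {i : ι} (hf : IsStrictPeak f i) :
    f i ≠ 0 := by
  obtain ⟨j, hj⟩ := exists_ne i
  exact norm_pos_iff.1 ((norm_nonneg _).trans_lt (hf j hj))

theorem norm_le_norm_add_single [DecidableEq ι] {f : lp E ∞} {i : ι} (hf : ¬ IsStrictPeak f i)
    (a : E i) : ‖f‖ ≤ ‖f + lp.single ∞ i a‖ := by
  have hcoord : ∀ j ≠ i, ‖f j‖ ≤ ‖f + lp.single ∞ i a‖ := fun j hj => by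
    simpa [Pi.single_apply, hj] using norm_apply_le_norm top_ne_zero (f + lp.single ∞ i a) j
  refine norm_le_of_forall_le (norm_nonneg _) fun j => ?_
  obtain rfl | hj := eq_or_ne j i
  · obtain ⟨k, hk, hle⟩ : ∃ k ≠ j, ‖f j‖ ≤ ‖f k‖ := by
      simpa [IsStrictPeak] using hf
    exact hle.trans (hcoord k hk)
  · exact hcoord j hj

end lp

theorem Submodule.exists_forall_not_isStrictPeak {ι : Type*} [Infinite ι]
    (Y : Submodule ℝ (lp (fun _ : ι => ℝ) ∞)) [FiniteDimensional ℝ Y]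
    (hY : (extremePoints ℝ (closedBall (0 : Y) 1)).Finite) :
    ∃ i, ∀ y ∈ Y, ¬ lp.IsStrictPeak y i := by
  by_contra! hpeak
  choose y hyY hy using hpeak
  set B := closedBall (0 : Y) 1
  let φ (i : ι) : StrongDual ℝ Y := (lp.evalCLM ℝ (fun _ : ι => ℝ) ∞ i).comp Y.subtypeL
  have hφ (i : ι) (w : Y) : φ i w = (w : lp (fun _ : ι => ℝ) ∞) i := rfl
  let z (i : ι) : Y := (y i i)⁻¹ • ⟨y i, hyY i⟩
  have hz (i j : ι) : (z i : lp (fun _ : ι => ℝ) ∞) j = (y i i)⁻¹ * y i j := rfl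
  have hφB (i : ι) (w : Y) (hw : w ∈ B) : φ i w ≤ 1 := calc
    φ i w ≤ ‖(w : lp (fun _ : ι => ℝ) ∞) i‖ := le_abs_self _
    _ ≤ ‖w‖ := lp.norm_apply_le_norm top_ne_zero _ i
    _ ≤ 1 := mem_closedBall_zero_iff.1 hw
  have hzB (i : ι) : z i ∈ B := by
    rw [mem_closedBall_zero_iff, norm_smul, Submodule.coe_norm, (hy i).norm_eq, norm_inv,
      inv_mul_cancel₀ (norm_ne_zero_iff.2 (hy i).apply_ne_zero)]
  have hφz (i : ι) : φ i (z i) = 1 := by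
    rw [hφ, hz, inv_mul_cancel₀ (hy i).apply_ne_zero]
  have hφz_lt {i j : ι} (hji : j ≠ i) : φ j (z i) < 1 := calc
    φ j (z i) ≤ ‖(y i i)⁻¹ * y i j‖ := le_abs_self _
    _ < 1 := by
      rw [norm_mul, norm_inv, inv_mul_lt_one₀ (norm_pos_iff.2 (hy i).apply_ne_zero)]
      exact hy i j hji
  let F (i : ι) : Set Y := (φ i).toExposed B
  have hzF (i : ι) : z i ∈ F i := ⟨hzB i, fun w hw => (hφz i).symm ▸ hφB i w hw⟩
  have hF : Function.Injective F := fun i j hij => by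
    by_contra hne
    have hle := (hij ▸ hzF j).2 (z i) (hzB i)
    rw [hφz] at hle
    exact (hφz_lt hne).not_ge hle
  exact Set.infinite_of_injective_forall_mem hF (fun i => ContinuousLinearMap.toExposed.isExposed)
    (Set.Finite.setOf_isExposed (isCompact_closedBall 0 1) (convex_closedBall 0 1) hY)

/-- No finite-dimensional polyhedral subspace of `ℓ∞(ℝ)` (bounded real
sequences with the sup norm) is anti-coproximinal: for every finite-dimensional subspace `Y`
whose unit ball has finitely many extreme points, there is a nonzero `x` which is
Birkhoff–James orthogonal to every element of `Y`. -/
theorem no_finiteDimensional_polyhedral_antiCoproximinal_subspace_of_linfty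
    (Y : Submodule ℝ (lp (fun _ : ℕ => ℝ) ∞)) [FiniteDimensional ℝ Y]
    (hYpoly : (extremePoints ℝ (closedBall (0 : Y) 1)).Finite) :
    ∃ x : lp (fun _ : ℕ => ℝ) ∞, x ≠ 0 ∧
      ∀ y ∈ Y, ∀ lam : ℝ, ‖y‖ ≤ ‖y + lam • x‖ := by
  obtain ⟨n, hn⟩ := Y.exists_forall_not_isStrictPeak hYpoly
  refine ⟨lp.single ∞ n 1, fun h => by simpa using congr_arg (· n) h, fun y hy lam => ?_⟩
  rw [← lp.single_smul, smul_eq_mul, mul_one]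
  exact lp.norm_le_norm_add_single (hn y hy) lam
end

section
/- Let K be a locally compact, normal Hausdorff space and let Y be an anti-coproximinal linear subspace of C₀(K). Then for each nonempty open subset U of K there exists f ∈ Y such that M_f ⊆ U, where M_f = { k ∈ K : |f(k)| = ‖f‖ }. -/
/-!
Take `g ∈ C₀(K)` nonzero and vanishing off `U` (Urysohn). Anti-coproximinality gives `f ∈ Y` with
`‖f + λ g‖ < ‖f‖` for some `λ`. At a point `k ∉ U` we have `(f + λ g) k = f k`, so `f` cannot attain
its norm there.
-/

open Filter Topology Metric

def AntiCoproximinal (𝕜 : Type*) {X : Type*} [RCLike 𝕜] [NormedAddCommGroup X]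
    [NormedSpace 𝕜 X] (S : Set X) : Prop :=
  ∀ x : X, x ≠ 0 → ∃ y ∈ S, ¬ ∀ lam : 𝕜, ‖y‖ ≤ ‖y + lam • x‖

open Set
open scoped ZeroAtInfty

namespace ZeroAtInftyContinuousMap

theorem norm_le_norm_add_of_apply_eq_zero {K β : Type*} [TopologicalSpace K]
    [SeminormedAddCommGroup β] {f g : C₀(K, β)} {k : K} (hf : ‖f k‖ = ‖f‖) (hg : g k = 0) :
    ‖f‖ ≤ ‖f + g‖ :=
  calc ‖f‖ = ‖(f + g) k‖ := by simp [hg, hf]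
    _ ≤ ‖f + g‖ := (f + g).toBCF.norm_coe_le_norm k

theorem exists_ne_zero_eqOn_compl {𝕜 K : Type*} [RCLike 𝕜] [TopologicalSpace K]
    [RegularSpace K] [LocallyCompactSpace K] {U : Set K} (hU : IsOpen U) (hUne : U.Nonempty) :
    ∃ g : C₀(K, 𝕜), g ≠ 0 ∧ EqOn g 0 Uᶜ := by
  obtain ⟨k₀, hk₀⟩ := hUne
  obtain ⟨g, hg1, hg0, hgc, -⟩ := exists_continuous_one_zero_of_isCompact isCompact_singleton
    hU.isClosed_compl (disjoint_singleton_left.mpr fun h => h hk₀)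
  let g' : C(K, 𝕜) := (⟨RCLike.ofReal, RCLike.continuous_ofReal⟩ : C(ℝ, 𝕜)).comp g
  have hg'c : HasCompactSupport g' := hgc.comp_left RCLike.ofReal_zero
  refine ⟨⟨g', hg'c.is_zero_at_infty⟩, fun h => ?_, fun k hk => ?_⟩
  · have hk₀ : ((g k₀ : ℝ) : 𝕜) = 0 := congrArg (fun G : C₀(K, 𝕜) => G k₀) h
    simp [hg1 rfl] at hk₀
  · show ((g k : ℝ) : 𝕜) = 0
    simp [hg0 hk]

end ZeroAtInftyContinuousMap

open ZeroAtInftyContinuousMap in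
theorem antiCoproximinal_C0_norm_attainment_in_open_general
    {𝕜 K : Type*} [RCLike 𝕜] [TopologicalSpace K] [LocallyCompactSpace K]
    [T2Space K]
    (Y : Submodule 𝕜 (ZeroAtInftyContinuousMap K 𝕜))
    (hY : AntiCoproximinal 𝕜 (Y : Set (ZeroAtInftyContinuousMap K 𝕜))) :
    ∀ U : Set K, IsOpen U → U.Nonempty →
      ∃ f ∈ Y, {k : K | ‖f k‖ = ‖f‖} ⊆ U := by
  intro U hU hUne
  obtain ⟨g, hg, hgU⟩ := exists_ne_zero_eqOn_compl (𝕜 := 𝕜) hU hUne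
  obtain ⟨f, hfY, hf⟩ := hY g hg
  refine ⟨f, hfY, fun k hk => by_contra fun hkU => hf fun lam => ?_⟩
  exact norm_le_norm_add_of_apply_eq_zero hk (by simp [hgU hkU])

/-- If `K` is a locally compact normal Hausdorff space and `Y` is an
anti-coproximinal subspace of `C₀(K)`, then for every nonempty open `U ⊆ K` there exists
`f ∈ Y` whose norm attainment set `M_f = {k : |f k| = ‖f‖}` is contained in `U`. -/
theorem antiCoproximinal_C0_norm_attainment_in_open
    {𝕜 K : Type*} [RCLike 𝕜] [TopologicalSpace K] [LocallyCompactSpace K]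
    [T2Space K] [NormalSpace K]
    (Y : Submodule 𝕜 (ZeroAtInftyContinuousMap K 𝕜))
    (hY : AntiCoproximinal 𝕜 (Y : Set (ZeroAtInftyContinuousMap K 𝕜))) :
    ∀ U : Set K, IsOpen U → U.Nonempty →
      ∃ f ∈ Y, {k : K | ‖f k‖ = ‖f‖} ⊆ U :=
  antiCoproximinal_C0_norm_attainment_in_open_general Y hY
end

section
/- Let K be a locally connected, locally compact, perfectly normal Hausdorff space with no isolated points. Then every finite-codimensional linear subspace of the real Banach space C₀(K) = C₀(K, ℝ) is strongly anti-coproximinal in C₀(K). -/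
open Filter Topology Metric

/-!
Given `x ≠ 0` and `ε < ε' < 1`, after replacing `x` by `-x` the open set `V = {x > ε' ‖x‖}` is
nonempty, hence infinite because `K` has no isolated points. Put `2n + 1` bumps `gᵢ` with disjoint
supports in `V`, where `n` is the codimension of `Y`. The coefficient vectors `a` with
`∑ aᵢ gᵢ ∈ Y` form a subspace `W` of `ℝ^(2n+1)` of dimension at least `n + 1`.

A subspace of `ℝⁿ` in which every vector `a` takes the value `-‖a‖` has dimension at most `n / 2`:
a nonzero vector with inclusion-minimal peak set has a positive and a negative peak at which all
vectors of the subspace are opposite, so both coordinates can be discarded at the cost of one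
dimension. Hence some `a ∈ W` stays above `-c` for some `c < ‖a‖`, and `y = ∑ aᵢ gᵢ ∈ Y` is a
function with `‖y‖ ≥ ‖a‖`, `y ≥ -c` and support in `V`. Then `‖y - t x‖ ≤ ‖y‖ - ε' t ‖x‖` for a
suitable `t > 0`.
-/

open Module Function
open scoped ZeroAtInfty

theorem Submodule.finrank_le_finrank_inf_ker_add_one {K V : Type*} [DivisionRing K]
    [AddCommGroup V] [Module K V] [FiniteDimensional K V] (W : Submodule K V) (f : V →ₗ[K] K) :
    finrank K W ≤ finrank K ↥(W ⊓ LinearMap.ker f) + 1 := by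
  have hsup := W.finrank_sup_add_finrank_inf_eq (LinearMap.ker f)
  have hker := f.finrank_range_add_finrank_ker
  have hrange : finrank K (LinearMap.range f) ≤ 1 :=
    (Submodule.finrank_le _).trans (finrank_self K).le
  have := (W ⊔ LinearMap.ker f).finrank_le
  omega

lemma finrank_le_finrank_comap_add_finrank_quotient {K E F : Type*} [Field K] [AddCommGroup E]
    [Module K E] [AddCommGroup F] [Module K F] [FiniteDimensional K F] (Y : Submodule K E)
    [FiniteDimensional K (E ⧸ Y)] (Φ : F →ₗ[K] E) :
    finrank K F ≤ finrank K (Y.comap Φ) + finrank K (E ⧸ Y) := by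
  have h := (Y.mkQ ∘ₗ Φ).finrank_range_add_finrank_ker
  rw [LinearMap.ker_comp, Submodule.ker_mkQ] at h
  have := Submodule.finrank_le (LinearMap.range (Y.mkQ ∘ₗ Φ))
  omega

section PeakSet

variable {ι E : Type*} [Fintype ι] [SeminormedAddCommGroup E]

def peakSet (a : ι → E) : Set ι := {i | ‖a i‖ = ‖a‖}

lemma eventually_peakSet_add_smul_subset [NormedSpace ℝ E] (a b : ι → E) :
    ∀ᶠ t : ℝ in 𝓝 0, peakSet (a + t • b) ⊆ peakSet a := by
  have hcont : Continuous fun t : ℝ => a + t • b := by fun_prop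
  have hoff : ∀ i, ∀ᶠ t : ℝ in 𝓝 0, ‖a i‖ < ‖a‖ → ‖(a + t • b) i‖ < ‖a + t • b‖ := by
    intro i
    by_cases h : ‖a i‖ < ‖a‖
    · have hi : ContinuousAt (fun t : ℝ => ‖(a + t • b) i‖) 0 := by fun_prop
      filter_upwards [hi.eventually_lt hcont.norm.continuousAt (by simpa using h)]
        with t ht _ using ht
    · exact .of_forall fun _ h' => absurd h' h
  filter_upwards [eventually_all.2 hoff] with t ht i hi
  by_contra hia
  exact (ht i ((norm_le_pi_norm a i).lt_of_ne hia)).ne hi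

end PeakSet

section HalfDimension

variable {ι : Type*} [Fintype ι] {W : Submodule ℝ (ι → ℝ)}

/- For small `t ≠ 0` the peak set of `a + t • b` lies in that of `a`, so by minimality it
contains `i` and `j`, where `a + t • b` keeps the signs of `a`. -/
lemma exists_pair_forall_add_eq_zero (hW : ∀ a ∈ W, ∃ i, a i = -‖a‖) {a : ι → ℝ}
    (ha : MinimalFor (fun z => z ∈ W ∧ z ≠ 0) peakSet a) :
    ∃ i j, a i = ‖a‖ ∧ a j = -‖a‖ ∧ ∀ b ∈ W, b i + b j = 0 := by
  obtain ⟨⟨haW, ha0⟩, hmin⟩ := ha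
  have hpos : 0 < ‖a‖ := norm_pos_iff.2 ha0
  obtain ⟨i, hi⟩ := hW (-a) (W.neg_mem haW)
  rw [Pi.neg_apply, norm_neg, neg_inj] at hi
  obtain ⟨j, hj⟩ := hW a haW
  refine ⟨i, j, hi, hj, fun b hb => ?_⟩
  have hcont : Continuous fun t : ℝ => a + t • b := by fun_prop
  have hev : ∀ᶠ t in 𝓝[≠] (0 : ℝ), t ≠ 0 ∧ peakSet (a + t • b) ⊆ peakSet a ∧
      0 < (a + t • b) i ∧ (a + t • b) j < 0 := by
    refine eventually_mem_nhdsWithin.and (eventually_nhdsWithin_of_eventually_nhds ?_)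
    refine (eventually_peakSet_add_smul_subset a b).and (.and ?_ ?_)
    · exact continuousAt_const.eventually_lt ((continuous_apply i).comp hcont).continuousAt
        (by simpa [hi] using hpos)
    · exact ((continuous_apply j).comp hcont).continuousAt.eventually_lt continuousAt_const
        (by simpa [hj] using hpos)
  obtain ⟨t, ht, hsub, hzi, hzj⟩ := hev.exists
  have hpeak := hmin ⟨W.add_mem haW (W.smul_mem t hb), ne_of_apply_ne (· i) hzi.ne'⟩ hsub
  have hzi' : |(a + t • b) i| = ‖a + t • b‖ := hpeak (by simp [peakSet, hi, abs_of_pos hpos])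
  have hzj' : |(a + t • b) j| = ‖a + t • b‖ := hpeak (by simp [peakSet, hj, abs_of_pos hpos])
  rw [abs_of_pos hzi] at hzi'
  rw [abs_of_neg hzj] at hzj'
  simp only [Pi.add_apply, Pi.smul_apply, smul_eq_mul, hi, hj] at hzi' hzj'
  have : t * (b i + b j) = 0 := by linarith
  exact (mul_eq_zero.1 this).resolve_left ht

lemma two_mul_finrank_le_finset_card_of_forall_exists_apply_eq_neg_norm
    (hW : ∀ a ∈ W, ∃ i, a i = -‖a‖) (s : Finset ι) (hs : ∀ a ∈ W, ∀ i ∉ s, a i = 0) :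
    2 * finrank ℝ W ≤ s.card := by
  induction s using Finset.strongInduction generalizing W with
  | H s ih =>
  classical
  obtain rfl | hbot := eq_or_ne W ⊥
  · simp
  obtain ⟨a₀, ha₀W, ha₀⟩ := W.exists_mem_ne_zero_of_ne_bot hbot
  obtain ⟨a, ha⟩ := exists_minimalFor_of_wellFoundedLT
    (fun z => z ∈ W ∧ z ≠ 0) peakSet ⟨a₀, ha₀W, ha₀⟩
  obtain ⟨i, j, hi, hj, hpair⟩ := exists_pair_forall_add_eq_zero hW ha
  have hpos : 0 < ‖a‖ := norm_pos_iff.2 ha.1.2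
  have hij : i ≠ j := by rintro rfl; linarith
  have his : i ∈ s := by_contra fun h => by linarith [hs a ha.1.1 i h]
  have hjs : j ∈ s := by_contra fun h => by linarith [hs a ha.1.1 j h]
  set W₁ := W ⊓ LinearMap.ker (LinearMap.proj i : (ι → ℝ) →ₗ[ℝ] ℝ)
  have hW₁ : ∀ b ∈ W₁, b ∈ W ∧ b i = 0 ∧ b j = 0 := fun b hb => by
    have hbi : b i = 0 := hb.2
    exact ⟨hb.1, hbi, by linarith [hpair b hb.1]⟩
  have hsub : (s.erase i).erase j ⊂ s :=
    (Finset.erase_subset j _).trans_ssubset (Finset.erase_ssubset his)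
  have hcard : ((s.erase i).erase j).card + 2 = s.card := by
    rw [Finset.card_erase_of_mem (Finset.mem_erase.2 ⟨hij.symm, hjs⟩),
      Finset.card_erase_of_mem his]
    have : 2 ≤ s.card := Finset.one_lt_card.2 ⟨i, his, j, hjs, hij⟩
    omega
  have ih₁ := ih _ hsub (fun b hb => hW b (hW₁ b hb).1) fun b hb k hk => by
    obtain rfl | rfl | hks : k = i ∨ k = j ∨ k ∉ s := by
      simp only [Finset.mem_erase, not_and_or, not_not] at hk; tauto
    exacts [(hW₁ b hb).2.1, (hW₁ b hb).2.2, hs b (hW₁ b hb).1 k hks]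
  have hrank : finrank ℝ W ≤ finrank ℝ W₁ + 1 := W.finrank_le_finrank_inf_ker_add_one _
  omega

theorem two_mul_finrank_le_card_of_forall_exists_apply_eq_neg_norm
    (hW : ∀ a ∈ W, ∃ i, a i = -‖a‖) : 2 * finrank ℝ W ≤ Fintype.card ι :=
  two_mul_finrank_le_finset_card_of_forall_exists_apply_eq_neg_norm hW Finset.univ
    fun _ _ i hi => absurd (Finset.mem_univ i) hi

end HalfDimension

lemma exists_neg_le_of_forall_ne_neg_norm {ι : Type*} [Fintype ι] [Nonempty ι] {a : ι → ℝ}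
    (ha : ∀ i, a i ≠ -‖a‖) : ∃ c, 0 ≤ c ∧ c < ‖a‖ ∧ ∀ i, -c ≤ a i := by
  obtain ⟨i₀, hi₀⟩ := Finite.exists_min a
  have hlt : -‖a‖ < a i₀ := (neg_le_of_abs_le (norm_le_pi_norm a i₀)).lt_of_ne (ha i₀).symm
  have hle : a i₀ ≤ ‖a‖ := le_of_abs_le (norm_le_pi_norm a i₀)
  exact ⟨max 0 (-a i₀), le_max_left _ _, max_lt (by linarith) (by linarith),
    fun i => (neg_le_neg (le_max_right _ _)).trans (by simpa using hi₀ i)⟩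

namespace ZeroAtInftyContinuousMap

variable {X E : Type*} [TopologicalSpace X] [SeminormedAddCommGroup E]

theorem norm_coe_le_norm (f : C₀(X, E)) (x : X) : ‖f x‖ ≤ ‖f‖ :=
  norm_toBCF_eq_norm (f := f) ▸ f.toBCF.norm_coe_le_norm x

theorem norm_le {f : C₀(X, E)} {C : ℝ} (hC : 0 ≤ C) : ‖f‖ ≤ C ↔ ∀ x, ‖f x‖ ≤ C := by
  rw [← norm_toBCF_eq_norm, BoundedContinuousFunction.norm_le hC]
  rfl

lemma exists_lt_norm_apply {f : C₀(X, E)} {r : ℝ} (hr₀ : 0 ≤ r) (hr : r < ‖f‖) :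
    ∃ x, r < ‖f x‖ := by
  by_contra! h
  exact hr.not_ge ((norm_le hr₀).2 h)

instance : IsZeroApply C₀(X, E) X E := ⟨fun _ => rfl⟩

instance : IsAddApply C₀(X, E) X E := ⟨fun _ _ _ => rfl⟩

end ZeroAtInftyContinuousMap

section DisjointBumps

open ZeroAtInftyContinuousMap (norm_coe_le_norm)

variable {X ι : Type*} [TopologicalSpace X] [Fintype ι] {g : ι → C₀(X, ℝ)} (a : ι → ℝ)

lemma exists_apply_ne_zero_of_sum_smul_apply_ne_zero {x : X} (h : (∑ j, a j • g j) x ≠ 0) :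
    ∃ i, g i x ≠ 0 := by
  rw [sum_apply] at h
  obtain ⟨i, -, hi⟩ := Finset.exists_ne_zero_of_sum_ne_zero h
  exact ⟨i, right_ne_zero_of_smul (by rwa [ZeroAtInftyContinuousMap.smul_apply] at hi)⟩

lemma sum_smul_apply_of_apply_ne_zero (hg : Pairwise (Disjoint on fun i => support (g i)))
    {i : ι} {x : X} (hx : g i x ≠ 0) : (∑ j, a j • g j) x = a i * g i x := by
  rw [sum_apply, Finset.sum_eq_single i (fun j _ hji => ?_) (by simp)]
  · rfl
  rw [ZeroAtInftyContinuousMap.smul_apply,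
    notMem_support.1 fun hj => Set.disjoint_left.1 (hg hji) hj hx, smul_zero]

lemma neg_le_sum_smul_apply (hg : Pairwise (Disjoint on fun i => support (g i)))
    (hg01 : ∀ i x, g i x ∈ Set.Icc 0 1) {c : ℝ} (hc : 0 ≤ c) (ha : ∀ i, -c ≤ a i) (x : X) :
    -c ≤ (∑ j, a j • g j) x := by
  by_cases hx : (∑ j, a j • g j) x = 0
  · linarith
  obtain ⟨i, hi⟩ := exists_apply_ne_zero_of_sum_smul_apply_ne_zero a hx
  rw [sum_smul_apply_of_apply_ne_zero a hg hi]
  obtain ⟨h0, h1⟩ := hg01 i x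
  nlinarith [ha i]

lemma norm_le_norm_sum_smul (hg : Pairwise (Disjoint on fun i => support (g i))) {p : ι → X}
    (hp : ∀ i, g i (p i) = 1) : ‖a‖ ≤ ‖∑ j, a j • g j‖ := by
  refine (pi_norm_le_iff_of_nonneg (norm_nonneg _)).2 fun i => ?_
  have := sum_smul_apply_of_apply_ne_zero a hg (i := i) (x := p i) (by simp [hp])
  rw [hp, mul_one] at this
  exact this ▸ norm_coe_le_norm _ (p i)

end DisjointBumps

lemma IsOpen.infinite_of_nonempty {X : Type*} [TopologicalSpace X] [T1Space X]
    (hX : ∀ x : X, ¬IsOpen {x}) {V : Set X} (hV : IsOpen V) (hne : V.Nonempty) : V.Infinite :=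
  fun hfin => hne.elim fun x hx =>
    hX x (isOpen_singleton_of_finite_mem_nhds x (hV.mem_nhds hx) hfin)

lemma exists_disjoint_bumps {X : Type*} [TopologicalSpace X] [LocallyCompactSpace X] [T2Space X]
    {V : Set X} (hV : IsOpen V) (hinf : V.Infinite) (ι : Type*) [Fintype ι] :
    ∃ (p : ι → X) (g : ι → C₀(X, ℝ)), (∀ i, g i (p i) = 1) ∧ (∀ i x, g i x ∈ Set.Icc 0 1) ∧
      (∀ i, support (g i) ⊆ V) ∧ Pairwise (Disjoint on fun i => support (g i)) := by
  let e : ι ↪ V :=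
    (Fintype.equivFin ι).toEmbedding.trans (Fin.valEmbedding.trans (hinf.natEmbedding V))
  obtain ⟨U, hU, hUdisj⟩ := (Set.finite_range fun i => (e i : X)).t2_separation
  have hbump (i : ι) : ∃ g : C₀(X, ℝ), g (e i) = 1 ∧ (∀ x, g x ∈ Set.Icc 0 1) ∧
      support g ⊆ U (e i) ∩ V := by
    obtain ⟨f, hf1, hf0, hfc, hf01⟩ := exists_continuous_one_zero_of_isCompact
      isCompact_singleton ((hU (e i)).2.inter hV).isClosed_compl
      (Set.disjoint_compl_right_iff_subset.2 (Set.singleton_subset_iff.2 ⟨(hU _).1, (e i).2⟩))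
    exact ⟨⟨f, hfc.is_zero_at_infty⟩, hf1 rfl, hf01, support_subset_iff'.2 fun x hx => hf0 hx⟩
  choose g hg1 hg01 hgU using hbump
  refine ⟨fun i => e i, g, hg1, hg01, fun i => (hgU i).trans Set.inter_subset_right,
    fun i j hij => ?_⟩
  exact (hUdisj (Set.mem_range_self i) (Set.mem_range_self j)
    (Subtype.val_injective.ne (e.injective.ne hij))).mono
      ((hgU i).trans Set.inter_subset_left) ((hgU j).trans Set.inter_subset_left)

lemma exists_norm_add_smul_lt {X : Type*} [TopologicalSpace X] {x y : C₀(X, ℝ)} {ε ε' c : ℝ}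
    (hx : x ≠ 0) (hεε' : ε < ε') (hε' : 0 ≤ ε') (hc : 0 ≤ c) (hcy : c < ‖y‖)
    (hy : ∀ k, -c ≤ y k) (hyx : ∀ k, y k ≠ 0 → ε' * ‖x‖ < x k) :
    ∃ t : ℝ, ‖y + t • x‖ < ‖y‖ - ε * ‖t • x‖ := by
  have hxn : 0 < ‖x‖ := norm_pos_iff.2 hx
  -- the step at which the lower bound `-c - s * ‖x‖` of `y - s • x` meets `-(‖y‖ - ε' * s * ‖x‖)`
  set s := (‖y‖ - c) / ((1 + ε') * ‖x‖)
  have hs : 0 < s := div_pos (by linarith) (by positivity)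
  have hsx : (1 + ε') * (s * ‖x‖) = ‖y‖ - c := by
    simp only [s]; field_simp
  refine ⟨-s, ?_⟩
  have hnorm : ‖(-s) • x‖ = s * ‖x‖ := by rw [norm_smul, norm_neg, Real.norm_of_nonneg hs.le]
  have hbound : ‖y + (-s) • x‖ ≤ ‖y‖ - ε' * (s * ‖x‖) := by
    refine (ZeroAtInftyContinuousMap.norm_le (by nlinarith)).2 fun k => ?_
    have hxk := abs_le.1 (ZeroAtInftyContinuousMap.norm_coe_le_norm x k)
    have hyk := abs_le.1 (ZeroAtInftyContinuousMap.norm_coe_le_norm y k)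
    rw [ZeroAtInftyContinuousMap.add_apply, ZeroAtInftyContinuousMap.smul_apply, smul_eq_mul,
      Real.norm_eq_abs, abs_le]
    have hsxk : s * x k ≤ s * ‖x‖ := mul_le_mul_of_nonneg_left hxk.2 hs.le
    by_cases hk : y k = 0
    · have : -(s * ‖x‖) ≤ s * x k := by nlinarith
      constructor <;> nlinarith
    · have : s * (ε' * ‖x‖) ≤ s * x k := mul_le_mul_of_nonneg_left (hyx k hk).le hs.le
      constructor <;> nlinarith [hy k]
  rw [hnorm]
  nlinarith [mul_pos hs hxn]

lemma exists_mem_norm_add_smul_lt {X : Type*} [TopologicalSpace X] [LocallyCompactSpace X]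
    [T2Space X] (hX : ∀ x : X, ¬IsOpen {x}) (Y : Submodule ℝ C₀(X, ℝ))
    [FiniteDimensional ℝ (C₀(X, ℝ) ⧸ Y)] {x : C₀(X, ℝ)} (hx : x ≠ 0) {ε ε' : ℝ}
    (hεε' : ε < ε') (hε' : 0 ≤ ε') {k : X} (hk : ε' * ‖x‖ < x k) :
    ∃ y ∈ Y, ∃ t : ℝ, ‖y + t • x‖ < ‖y‖ - ε * ‖t • x‖ := by
  set V := {k | ε' * ‖x‖ < x k}
  have hV : IsOpen V := isOpen_lt continuous_const x.continuous
  set n := finrank ℝ (C₀(X, ℝ) ⧸ Y)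
  obtain ⟨p, g, hp, hg01, hgV, hg⟩ :=
    exists_disjoint_bumps hV (hV.infinite_of_nonempty hX ⟨k, hk⟩) (Fin (2 * n + 1))
  set W := Y.comap (Fintype.linearCombination ℝ g)
  have hW : 2 * n + 1 < 2 * finrank ℝ W := by
    have : finrank ℝ (Fin (2 * n + 1) → ℝ) ≤ finrank ℝ W + n :=
      finrank_le_finrank_comap_add_finrank_quotient Y _
    rw [finrank_fin_fun] at this
    omega
  obtain ⟨a, haW, ha⟩ : ∃ a ∈ W, ∀ i, a i ≠ -‖a‖ := by
    by_contra! h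
    have := two_mul_finrank_le_card_of_forall_exists_apply_eq_neg_norm h
    rw [Fintype.card_fin] at this
    omega
  obtain ⟨c, hc, hca, hac⟩ := exists_neg_le_of_forall_ne_neg_norm ha
  refine ⟨∑ i, a i • g i, haW, exists_norm_add_smul_lt hx hεε' hε' hc
    (hca.trans_le (norm_le_norm_sum_smul a hg hp)) (neg_le_sum_smul_apply a hg hg01 hc hac)
    fun k hk => ?_⟩
  obtain ⟨i, hi⟩ := exists_apply_ne_zero_of_sum_smul_apply_ne_zero a hk
  exact hgV i hi

theorem stronglyAntiCoproximinal_of_finiteCodimensional_C0_general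
    {K : Type*} [TopologicalSpace K] [LocallyCompactSpace K]
    [T2Space K]
    (hK : ∀ k : K, ¬ IsOpen ({k} : Set K))
    (Y : Submodule ℝ (ZeroAtInftyContinuousMap K ℝ))
    (hcodim : FiniteDimensional ℝ (ZeroAtInftyContinuousMap K ℝ ⧸ Y)) :
    StronglyAntiCoproximinal (Y : Set (ZeroAtInftyContinuousMap K ℝ)) := by
  intro x hx ε hε hε1
  obtain ⟨ε', hεε', hε'1⟩ := exists_between hε1
  have hε' : 0 ≤ ε' := hε.trans hεε'.le
  obtain ⟨k, hk⟩ := x.exists_lt_norm_apply (by positivity)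
    (mul_lt_of_lt_one_left (norm_pos_iff.2 hx) hε'1)
  obtain ⟨y, hyY, t, hlt⟩ : ∃ y ∈ Y, ∃ t : ℝ, ‖y + t • x‖ < ‖y‖ - ε * ‖t • x‖ := by
    rcases lt_abs.1 hk with hk | hk
    · exact exists_mem_norm_add_smul_lt hK Y hx hεε' hε' hk
    · obtain ⟨y, hyY, t, hlt⟩ :=
        exists_mem_norm_add_smul_lt hK Y (neg_ne_zero.2 hx) hεε' hε' (k := k) (by simpa using hk)
      exact ⟨y, hyY, -t, by rwa [(neg_smul t x).trans (smul_neg t x).symm]⟩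
  exact ⟨y, hyY, fun h => (h t).not_gt hlt⟩

/-- Let `K` be a locally connected, locally compact, perfectly normal
Hausdorff space with no isolated points. Then every finite-codimensional subspace of
`C₀(K, ℝ)` is strongly anti-coproximinal. -/
theorem stronglyAntiCoproximinal_of_finiteCodimensional_C0
    {K : Type*} [TopologicalSpace K] [LocallyConnectedSpace K] [LocallyCompactSpace K]
    [T2Space K] [PerfectlyNormalSpace K]
    (hK : ∀ k : K, ¬ IsOpen ({k} : Set K))
    (Y : Submodule ℝ (ZeroAtInftyContinuousMap K ℝ))
    (hcodim : FiniteDimensional ℝ (ZeroAtInftyContinuousMap K ℝ ⧸ Y)) :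
    StronglyAntiCoproximinal (Y : Set (ZeroAtInftyContinuousMap K ℝ)) :=
  stronglyAntiCoproximinal_of_finiteCodimensional_C0_general hK Y hcodim
end

section
/- Let X and Y be Banach spaces and let T ∈ L(X, Y) be an absolutely strongly exposing operator with M_T = { μ x₀ : |μ| = 1 } for some x₀ ∈ S_X. Then for any A ∈ L(X, Y) with ‖A‖ = 1, one has T ⊥_B A if and only if T x₀ ⊥_B A x₀. -/
/-!
If `‖T‖ ≤ ‖T + c • B‖` for every scalar `c`, then for small `t > 0` a near-norming vector `x`
of `T + t • B` is near-norming for `T` as well, and the splitting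
`T + t • B = (1 - t) • T + t • (T + B)` forces `‖(T + B) x‖ ≥ ‖T‖ - t`. Letting `t → 0` gives
a norming sequence of `T` along which `‖(T + B) xₙ‖` is asymptotically at least `‖T‖`.
Absolute strong exposure moves this sequence, up to unimodular phases (which do not change
norms), to `x₀`, so `‖T‖ ≤ ‖(T + B) x₀‖`. The same limiting argument shows that `x₀` attains
`‖T‖` and that `‖S x₀‖ ≤ ‖S‖` for every operator `S`, which gives the converse.
-/

open Filter Topology

section DenselyNormed

variable {𝕜 E F G : Type*} [DenselyNormedField 𝕜] [NormedAddCommGroup E] [NormedSpace 𝕜 E]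
  [SeminormedAddCommGroup F] [NormedSpace 𝕜 F] [SeminormedAddCommGroup G] [NormedSpace 𝕜 G]

def AbsStronglyExposes (T : E →L[𝕜] F) (x₀ : E) : Prop :=
  ∀ xs : ℕ → E, (∀ n, ‖xs n‖ ≤ 1) →
    Tendsto (fun n => ‖T (xs n)‖) atTop (𝓝 ‖T‖) →
    ∃ θ : ℕ → 𝕜, (∀ n, ‖θ n‖ = 1) ∧ Tendsto (fun n => θ n • xs n) atTop (𝓝 x₀)

namespace ContinuousLinearMap

theorem tendsto_norm_apply_opNorm_of_le {T : E →L[𝕜] F} {xs : ℕ → E} {g : ℕ → ℝ}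
    (hxs : ∀ n, ‖xs n‖ ≤ 1) (hg : Tendsto g atTop (𝓝 ‖T‖)) (hgT : ∀ n, g n ≤ ‖T (xs n)‖) :
    Tendsto (fun n => ‖T (xs n)‖) atTop (𝓝 ‖T‖) :=
  tendsto_of_tendsto_of_tendsto_of_le_of_le hg tendsto_const_nhds hgT
    fun n => T.unit_le_opNorm _ (hxs n)

theorem exists_seq_tendsto_norm_apply_opNorm (T : E →L[𝕜] F) :
    ∃ xs : ℕ → E, (∀ n, ‖xs n‖ ≤ 1) ∧ Tendsto (fun n => ‖T (xs n)‖) atTop (𝓝 ‖T‖) := by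
  choose xs hxs hlow using fun n : ℕ =>
    T.exists_lt_apply_of_lt_opNorm (r := ‖T‖ - 1 / ((n : ℝ) + 1))
      (sub_lt_self _ Nat.one_div_pos_of_nat)
  have hlim : Tendsto (fun n : ℕ => ‖T‖ - 1 / ((n : ℝ) + 1)) atTop (𝓝 ‖T‖) := by
    simpa using (tendsto_const_nhds (x := ‖T‖)).sub tendsto_one_div_add_atTop_nhds_zero_nat
  exact ⟨xs, fun n => (hxs n).le,
    tendsto_norm_apply_opNorm_of_le (fun n => (hxs n).le) hlim fun n => (hlow n).le⟩

end ContinuousLinearMap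

namespace AbsStronglyExposes

variable {T : E →L[𝕜] F} {x₀ : E}

theorem tendsto_norm_apply (hT : AbsStronglyExposes T x₀) {xs : ℕ → E}
    (hxs : ∀ n, ‖xs n‖ ≤ 1) (hnorming : Tendsto (fun n => ‖T (xs n)‖) atTop (𝓝 ‖T‖))
    (S : E →L[𝕜] G) : Tendsto (fun n => ‖S (xs n)‖) atTop (𝓝 ‖S x₀‖) := by
  obtain ⟨θ, hθ, hlim⟩ := hT xs hxs hnorming
  have hphase : ∀ n, ‖S (θ n • xs n)‖ = ‖S (xs n)‖ := fun n => by
    rw [map_smul, norm_smul, hθ n, one_mul]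
  simpa only [Function.comp_def, hphase] using ((S.continuous.tendsto x₀).comp hlim).norm

theorem norm_apply_le_opNorm (hT : AbsStronglyExposes T x₀) (S : E →L[𝕜] G) :
    ‖S x₀‖ ≤ ‖S‖ := by
  obtain ⟨xs, hxs, hnorming⟩ := T.exists_seq_tendsto_norm_apply_opNorm
  exact le_of_tendsto' (hT.tendsto_norm_apply hxs hnorming S)
    fun n => S.unit_le_opNorm _ (hxs n)

theorem norm_apply_eq_opNorm (hT : AbsStronglyExposes T x₀) : ‖T x₀‖ = ‖T‖ := by
  obtain ⟨xs, hxs, hnorming⟩ := T.exists_seq_tendsto_norm_apply_opNorm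
  exact tendsto_nhds_unique (hT.tendsto_norm_apply hxs hnorming T) hnorming

end AbsStronglyExposes

end DenselyNormed

section RCLike

variable {𝕜 E F : Type*} [RCLike 𝕜] [NormedAddCommGroup E] [NormedSpace 𝕜 E]
  [SeminormedAddCommGroup F] [NormedSpace 𝕜 F]

theorem sub_lt_norm_add_of_sub_sq_lt_norm_add_smul {u v : F} {M t : ℝ} (hu : ‖u‖ ≤ M)
    (ht0 : 0 < t) (ht1 : t ≤ 1) (h : M - t ^ 2 < ‖u + (t : 𝕜) • v‖) : M - t < ‖u + v‖ := by
  have hsplit : u + (t : 𝕜) • v = ((1 - t : ℝ) : 𝕜) • u + (t : 𝕜) • (u + v) := by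
    push_cast
    module
  have hconvex : ‖u + (t : 𝕜) • v‖ ≤ (1 - t) * M + t * ‖u + v‖ := by
    rw [hsplit]
    refine (norm_add_le _ _).trans ?_
    rw [norm_smul, norm_smul, RCLike.norm_ofReal, RCLike.norm_ofReal, abs_of_nonneg (by linarith),
      abs_of_pos ht0]
    gcongr
  have : t * (M - t) < t * ‖u + v‖ := by linarith
  exact lt_of_mul_lt_mul_left this ht0.le

namespace ContinuousLinearMap

theorem exists_near_norming_of_opNorm_le_opNorm_add_smul {T B : E →L[𝕜] F} {t : ℝ}
    (ht0 : 0 < t) (ht1 : t ≤ 1) (hTB : ‖T‖ ≤ ‖T + (t : 𝕜) • B‖) :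
    ∃ x : E, ‖x‖ ≤ 1 ∧ ‖T‖ - t ^ 2 - t * ‖B‖ < ‖T x‖ ∧ ‖T‖ - t < ‖(T + B) x‖ := by
  obtain ⟨x, hx, hnear⟩ := (T + (t : 𝕜) • B).exists_lt_apply_of_lt_opNorm
    (r := ‖T‖ - t ^ 2) (by nlinarith)
  have hperturb : ‖T x + (t : 𝕜) • B x‖ ≤ ‖T x‖ + t * ‖B‖ := by
    refine (norm_add_le _ _).trans ?_
    rw [norm_smul, RCLike.norm_ofReal, abs_of_pos ht0]
    gcongr
    exact B.unit_le_opNorm x hx.le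
  refine ⟨x, hx.le, ?_, ?_⟩
  · rw [add_apply, smul_apply] at hnear
    linarith
  · exact sub_lt_norm_add_of_sub_sq_lt_norm_add_smul (T.unit_le_opNorm x hx.le) ht0 ht1 hnear

end ContinuousLinearMap

theorem AbsStronglyExposes.opNorm_le_norm_add_apply {T B : E →L[𝕜] F} {x₀ : E}
    (hT : AbsStronglyExposes T x₀) (hTB : ∀ c : 𝕜, ‖T‖ ≤ ‖T + c • B‖) :
    ‖T‖ ≤ ‖(T + B) x₀‖ := by
  set t : ℕ → ℝ := fun n => 1 / ((n : ℝ) + 1)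
  have ht : Tendsto t atTop (𝓝 0) := tendsto_one_div_add_atTop_nhds_zero_nat
  have ht0 : ∀ n, 0 < t n := fun n => Nat.one_div_pos_of_nat
  have ht1 : ∀ n, t n ≤ 1 := fun n => (div_le_one (by positivity)).2 (by simp)
  choose xs hxs hT_low hTB_low using fun n =>
    ContinuousLinearMap.exists_near_norming_of_opNorm_le_opNorm_add_smul (ht0 n) (ht1 n)
      (hTB (t n))
  have hnorming : Tendsto (fun n => ‖T (xs n)‖) atTop (𝓝 ‖T‖) :=
    ContinuousLinearMap.tendsto_norm_apply_opNorm_of_le hxs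
      (by simpa using (tendsto_const_nhds.sub (ht.pow 2)).sub (ht.mul_const ‖B‖))
      fun n => (hT_low n).le
  exact le_of_tendsto_of_tendsto (by simpa using tendsto_const_nhds.sub ht)
    (hT.tendsto_norm_apply hxs hnorming (T + B)) (Eventually.of_forall fun n => (hTB_low n).le)

end RCLike

theorem BJ_orthogonality_of_ASE_operator_general
    {𝕜 X Y : Type*} [RCLike 𝕜]
    [NormedAddCommGroup X] [NormedSpace 𝕜 X]
    [NormedAddCommGroup Y] [NormedSpace 𝕜 Y]
    (T : X →L[𝕜] Y) (x₀ : X)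
    (hASE : ∀ xs : ℕ → X, (∀ n, ‖xs n‖ ≤ 1) →
      Tendsto (fun n => ‖T (xs n)‖) atTop (𝓝 ‖T‖) →
      ∃ θ : ℕ → 𝕜, (∀ n, ‖θ n‖ = 1) ∧ Tendsto (fun n => θ n • xs n) atTop (𝓝 x₀))
    (A : X →L[𝕜] Y) :
    (∀ lam : 𝕜, ‖T‖ ≤ ‖T + lam • A‖) ↔
      ∀ lam : 𝕜, ‖T x₀‖ ≤ ‖T x₀ + lam • A x₀‖ := by
  have hT : AbsStronglyExposes T x₀ := hASE
  rw [hT.norm_apply_eq_opNorm]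
  constructor
  · intro hTA lam
    have hTB : ∀ c : 𝕜, ‖T‖ ≤ ‖T + c • lam • A‖ := fun c => by
      simpa only [smul_smul] using hTA (c * lam)
    exact hT.opNorm_le_norm_add_apply hTB
  · intro hTA lam
    exact (hTA lam).trans (hT.norm_apply_le_opNorm (T + lam • A))

/-- Let `T ∈ L(X, Y)` be an absolutely strongly exposing operator with
`M_T = {μ • x₀ : |μ| = 1}`. Then for any `A` with `‖A‖ = 1`, `T ⊥_B A` iff
`T x₀ ⊥_B A x₀`. -/
theorem BJ_orthogonality_of_ASE_operator
    {𝕜 X Y : Type*} [RCLike 𝕜]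
    [NormedAddCommGroup X] [NormedSpace 𝕜 X] [CompleteSpace X]
    [NormedAddCommGroup Y] [NormedSpace 𝕜 Y] [CompleteSpace Y]
    (T : X →L[𝕜] Y) (x₀ : X) (hx₀ : ‖x₀‖ = 1)
    (hASE : ∀ xs : ℕ → X, (∀ n, ‖xs n‖ ≤ 1) →
      Tendsto (fun n => ‖T (xs n)‖) atTop (𝓝 ‖T‖) →
      ∃ θ : ℕ → 𝕜, (∀ n, ‖θ n‖ = 1) ∧ Tendsto (fun n => θ n • xs n) atTop (𝓝 x₀))
    (hMT : {x : X | ‖x‖ = 1 ∧ ‖T x‖ = ‖T‖} = {x : X | ∃ μ : 𝕜, ‖μ‖ = 1 ∧ x = μ • x₀})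
    (A : X →L[𝕜] Y) (hA : ‖A‖ = 1) :
    (∀ lam : 𝕜, ‖T‖ ≤ ‖T + lam • A‖) ↔
      ∀ lam : 𝕜, ‖T x₀‖ ≤ ‖T x₀ + lam • A x₀‖ :=
  BJ_orthogonality_of_ASE_operator_general T x₀ hASE A
end

section
/- Let X be a Banach space such that the set of strongly exposed points of B_X separates X* (i.e. for every nonzero x* ∈ X* there exists a strongly exposed point z of B_X with x*(z) ≠ 0), and let Y be any Banach space. If there exists a bounded linear operator from X to Y that is not compact, then the compact operators are anti-coproximinal in L(X, Y): for every nonzero S ∈ L(X, Y) there exists a compact operator T ∈ K(X, Y) such that ¬(T ⊥_B S). -/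
open Filter Topology Metric NormedSpace

/-- `z` is a strongly exposed point of the closed unit ball of `X`. -/
def IsStronglyExposedPoint (𝕜 : Type*) {X : Type*} [RCLike 𝕜] [NormedAddCommGroup X]
    [NormedSpace 𝕜 X] (z : X) : Prop :=
  ‖z‖ = 1 ∧ ∃ ψ : StrongDual 𝕜 X, ‖ψ‖ = 1 ∧ ψ z = 1 ∧
    ∀ xs : ℕ → X, (∀ n, ‖xs n‖ ≤ 1) →
      Tendsto (fun n => ψ (xs n)) atTop (𝓝 (1 : 𝕜)) → Tendsto xs atTop (𝓝 z)

/-!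
If the rank-one operator `T = ψ ⊗ S z`, with `ψ` strongly exposing `z` and `S z ≠ 0`, were
Birkhoff–James orthogonal to `S`, then `‖S z‖ ≤ ‖T - ε S‖` for every `ε > 0`. Take `x_ε` in the
unit ball almost norming `T - ε S`, rotated so that `ψ x_ε ≥ 0`. The norm estimate forces
`ψ x_ε → 1`, hence `x_ε → z` since `ψ` strongly exposes `z`; but it also gives
`‖S z‖ - ε ≤ ‖S‖ ‖x_ε - z‖`, so `S z = 0`. When the strongly exposed points separate the dual,
every `S ≠ 0` is nonzero at some strongly exposed point.
-/

section

variable {𝕜 X Y : Type*} [RCLike 𝕜] [NormedAddCommGroup X] [NormedSpace 𝕜 X]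
  [NormedAddCommGroup Y] [NormedSpace 𝕜 Y]

namespace ContinuousLinearMap

theorem isCompactOperator_smulRight (ψ : StrongDual 𝕜 X) (y : Y) :
    IsCompactOperator (ψ.smulRight y) :=
  (isCompactOperator_of_locallyCompactSpace_dom ψ).clm_comp (toSpanSingleton 𝕜 y)

theorem exists_apply_eq_norm_and_lt_norm_apply (A : X →L[𝕜] Y) (ψ : StrongDual 𝕜 X) {r : ℝ}
    (hr : r < ‖A‖) : ∃ x, ‖x‖ ≤ 1 ∧ ψ x = ‖ψ x‖ ∧ r < ‖A x‖ := by
  obtain ⟨x, hx, hrx⟩ := A.exists_lt_apply_of_lt_opNorm hr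
  obtain ⟨c, hc, hcx⟩ := RCLike.exists_norm_eq_mul_self (ψ x)
  refine ⟨c • x, ?_, ?_, ?_⟩
  · rw [norm_smul, hc, one_mul]
    exact hx.le
  · rw [map_smul, smul_eq_mul, ← hcx, RCLike.norm_ofReal, abs_norm]
  · rwa [map_smul, norm_smul, hc, one_mul]

end ContinuousLinearMap

theorem exists_norming_vector_of_norm_le_norm_smulRight_sub_smul {ψ : StrongDual 𝕜 X}
    (hψ : ‖ψ‖ ≤ 1) (z : X) (S : X →L[𝕜] Y) {ε : ℝ} (hε₀ : 0 < ε) (hε₁ : ε ≤ 1 / 2)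
    (h : ‖S z‖ ≤ ‖ψ.smulRight (S z) - (ε : 𝕜) • S‖) :
    ∃ x, ‖x‖ ≤ 1 ∧ ψ x = ‖ψ x‖ ∧ (1 - ‖ψ x‖) * ‖S z‖ ≤ ε * (ε + ‖S‖) ∧
      ‖S z‖ - ε ≤ ‖S‖ * ‖x - z‖ := by
  set A := ψ.smulRight (S z) - (ε : 𝕜) • S
  -- the slack `ε ^ 2` still tends to `0` after the final division by `ε`
  obtain ⟨x, hx, hψx, hAx⟩ :=
    A.exists_apply_eq_norm_and_lt_norm_apply ψ (r := ‖S z‖ - ε ^ 2) (by nlinarith)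
  set a := ‖ψ x‖
  have ha : a ≤ 1 := by simpa using ψ.le_of_opNorm_le_of_le hψ hx
  have hAx_eq : A x = (a : 𝕜) • S z - (ε : 𝕜) • S x := by simp [A, hψx]
  have hAx_le : ‖A x‖ ≤ a * ‖S z‖ + ε * ‖S‖ := by
    rw [hAx_eq]
    refine (norm_sub_le _ _).trans (add_le_add ?_ ?_)
    · rw [norm_smul, RCLike.norm_ofReal, abs_norm]
    · rw [norm_smul, RCLike.norm_ofReal, abs_of_pos hε₀]
      exact mul_le_mul_of_nonneg_left (S.unit_le_opNorm x hx) hε₀.le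
  have hAx_le_dist : ‖A x‖ ≤ (1 - ε) * ‖S z‖ + ε * (‖S‖ * ‖x - z‖) := by
    have : A x = ((a - ε : ℝ) : 𝕜) • S z - (ε : 𝕜) • S (x - z) := by
      rw [hAx_eq, map_sub, RCLike.ofReal_sub, sub_smul, smul_sub]
      abel
    rw [this]
    refine (norm_sub_le _ _).trans (add_le_add ?_ ?_)
    · rw [norm_smul, RCLike.norm_ofReal]
      exact mul_le_mul_of_nonneg_right (abs_le.2 ⟨by linarith [norm_nonneg (ψ x)], by linarith⟩)
        (norm_nonneg _)
    · rw [norm_smul, RCLike.norm_ofReal, abs_of_pos hε₀]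
      exact mul_le_mul_of_nonneg_left (S.le_opNorm _) hε₀.le
  refine ⟨x, hx, hψx, by nlinarith, ?_⟩
  have : ε * (‖S z‖ - ε) < ε * (‖S‖ * ‖x - z‖) := by nlinarith
  exact (lt_of_mul_lt_mul_left this hε₀.le).le

theorem IsStronglyExposedPoint.exists_not_forall_norm_le_norm_smulRight_add_smul {z : X}
    (hz : IsStronglyExposedPoint 𝕜 z) {S : X →L[𝕜] Y} (hSz : S z ≠ 0) :
    ∃ ψ : StrongDual 𝕜 X, ¬ ∀ lam : 𝕜, ‖ψ.smulRight (S z)‖ ≤ ‖ψ.smulRight (S z) + lam • S‖ := by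
  obtain ⟨hz1, ψ, hψ1, hψz, hexposes⟩ := hz
  refine ⟨ψ, fun horth => hSz ?_⟩
  have hT : ‖S z‖ ≤ ‖ψ.smulRight (S z)‖ := by
    simpa [hψz, hz1] using (ψ.smulRight (S z)).le_opNorm z
  obtain ⟨ε, -, hε, hε0⟩ := exists_seq_strictAnti_tendsto' (show (0 : ℝ) < 1 / 2 by norm_num)
  choose x hx hψx hnear hfar using fun n =>
    exists_norming_vector_of_norm_le_norm_smulRight_sub_smul hψ1.le z S (hε n).1 (hε n).2.le
      (hT.trans (by simpa [sub_eq_add_neg] using horth (-(ε n : 𝕜))))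
  have hSz_pos : 0 < ‖S z‖ := norm_pos_iff.2 hSz
  have hψx_tendsto : Tendsto (fun n => ‖ψ (x n)‖) atTop (𝓝 1) := by
    have hgap : Tendsto (fun n => ε n * (ε n + ‖S‖) / ‖S z‖) atTop (𝓝 0) := by
      simpa using ((hε0.mul (hε0.add_const ‖S‖)).div_const ‖S z‖)
    refine tendsto_of_tendsto_of_tendsto_of_le_of_le (by simpa using tendsto_const_nhds.sub hgap)
      tendsto_const_nhds (fun n => ?_) fun n => ?_
    · rw [sub_le_comm, le_div_iff₀ hSz_pos]
      exact hnear n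
    · simpa using ψ.le_of_opNorm_le_of_le hψ1.le (hx n)
  have hxz : Tendsto x atTop (𝓝 z) := hexposes x hx <| by
    have := ((RCLike.continuous_ofReal (K := 𝕜)).tendsto 1).comp hψx_tendsto
    rw [RCLike.ofReal_one] at this
    exact this.congr fun n => (hψx n).symm
  have := le_of_tendsto_of_tendsto' (tendsto_const_nhds.sub hε0)
    ((tendsto_iff_norm_sub_tendsto_zero.1 hxz).const_mul ‖S‖) hfar
  simpa using this

end

theorem compactOperators_antiCoproximinal_of_stronglyExposed_separating_general
    {𝕜 X Y : Type*} [RCLike 𝕜]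
    [NormedAddCommGroup X] [NormedSpace 𝕜 X]
    [NormedAddCommGroup Y] [NormedSpace 𝕜 Y]
    (hsep : ∀ φ : StrongDual 𝕜 X, φ ≠ 0 → ∃ z : X, IsStronglyExposedPoint 𝕜 z ∧ φ z ≠ 0) :
    ∀ S : X →L[𝕜] Y, S ≠ 0 → ∃ T : X →L[𝕜] Y, IsCompactOperator T ∧
      ¬ ∀ lam : 𝕜, ‖T‖ ≤ ‖T + lam • S‖ := by
  intro S hS
  obtain ⟨x, hx⟩ := ContinuousLinearMap.exists_ne_zero hS
  obtain ⟨g, hg⟩ := SeparatingDual.exists_ne_zero (R := 𝕜) hx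
  obtain ⟨z, hz, hgSz⟩ := hsep (g.comp S) fun h => hg (by simpa using congr($h x))
  have hSz : S z ≠ 0 := fun h => hgSz (by simp [h])
  obtain ⟨ψ, hψ⟩ := hz.exists_not_forall_norm_le_norm_smulRight_add_smul hSz
  exact ⟨ψ.smulRight (S z), ψ.isCompactOperator_smulRight (S z), hψ⟩

/-- If the strongly exposed points of `B_X` separate `X*` and some bounded
operator `X → Y` is not compact, then the compact operators are anti-coproximinal in
`L(X, Y)`: for every nonzero `S` there is a compact operator `T` with `¬(T ⊥_B S)`. -/
theorem compactOperators_antiCoproximinal_of_stronglyExposed_separating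
    {𝕜 X Y : Type*} [RCLike 𝕜]
    [NormedAddCommGroup X] [NormedSpace 𝕜 X] [CompleteSpace X]
    [NormedAddCommGroup Y] [NormedSpace 𝕜 Y] [CompleteSpace Y]
    (hsep : ∀ φ : StrongDual 𝕜 X, φ ≠ 0 → ∃ z : X, IsStronglyExposedPoint 𝕜 z ∧ φ z ≠ 0)
    (hnc : ∃ S₀ : X →L[𝕜] Y, ¬ IsCompactOperator S₀) :
    ∀ S : X →L[𝕜] Y, S ≠ 0 → ∃ T : X →L[𝕜] Y, IsCompactOperator T ∧
      ¬ ∀ lam : 𝕜, ‖T‖ ≤ ‖T + lam • S‖ :=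
  compactOperators_antiCoproximinal_of_stronglyExposed_separating_general hsep
end

section
/- Let X and Y be Banach spaces such that B_X equals the closed convex hull of the set of strongly exposed points of B_X. If there exists a bounded linear operator from X to Y that is not compact, then the compact operators are strongly anti-coproximinal in L(X, Y): for every nonzero S ∈ L(X, Y) and every ε ∈ [0,1) there exists a compact operator T ∈ K(X, Y) such that ¬(T ⊥_B^ε S). -/
open Filter Topology Metric NormedSpace

theorem ContinuousLinearMap.isCompactOperator_smulRight_s19 {𝕜 X Y : Type*}
    [NontriviallyNormedField 𝕜] [LocallyCompactSpace 𝕜]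
    [NormedAddCommGroup X] [NormedSpace 𝕜 X] [NormedAddCommGroup Y] [NormedSpace 𝕜 Y]
    (ψ : StrongDual 𝕜 X) (v : Y) : IsCompactOperator (ψ.smulRight v) :=
  (isCompactOperator_of_locallyCompactSpace_dom ψ).continuous_comp
    (continuous_id.smul continuous_const)

theorem tendsto_one_of_le_one_of_natCast_add_one_mul_one_sub_le {r : ℕ → ℝ} {K : ℝ}
    (hr : ∀ n, r n ≤ 1) (hK : ∀ n, (n + 1) * (1 - r n) ≤ K) : Tendsto r atTop (𝓝 1) := by
  have hr_ge n : 1 - K * (1 / (n + 1)) ≤ r n := by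
    have := hK n
    rw [mul_one_div, sub_le_comm, le_div_iff₀ (by positivity)]
    linarith
  have hlim := (tendsto_const_nhds (x := (1 : ℝ))).sub
    ((tendsto_one_div_add_atTop_nhds_zero_nat (𝕜 := ℝ)).const_mul K)
  rw [mul_zero, sub_zero] at hlim
  exact tendsto_of_tendsto_of_tendsto_of_le_of_le hlim tendsto_const_nhds hr_ge hr

section

variable {𝕜 X Y : Type*} [RCLike 𝕜] [NormedAddCommGroup X] [NormedSpace 𝕜 X]
  [NormedAddCommGroup Y] [NormedSpace 𝕜 Y]

theorem exists_mem_lt_norm_apply_of_closedBall_eq_closure_convexHull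
    [NormedSpace ℝ X] [IsScalarTower ℝ 𝕜 X] {E : Set X}
    (hE : closedBall (0 : X) 1 = closure (convexHull ℝ E)) (S : X →L[𝕜] Y) {c : ℝ}
    (hc : c < ‖S‖) : ∃ z ∈ E, c < ‖S z‖ := by
  by_contra! h
  let p : Seminorm 𝕜 X := (normSeminorm 𝕜 Y).comp S.toLinearMap
  have hball : closedBall (0 : X) 1 ⊆ {x | x ∈ Set.univ ∧ p x ≤ c} :=
    hE ▸ closure_minimal (convexHull_min (fun z hz => ⟨trivial, h z hz⟩) (p.convexOn.convex_le c))
      (isClosed_univ.inter (isClosed_le S.continuous.norm continuous_const))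
  obtain ⟨x, hx, hSx⟩ := S.exists_lt_apply_of_lt_opNorm hc
  exact (hball (mem_closedBall_zero_iff.2 hx.le)).2.not_gt hSx

theorem ContinuousLinearMap.exists_lt_apply_of_lt_opNorm_of_apply_eq_norm
    (A : X →L[𝕜] Y) (ψ : StrongDual 𝕜 X) {c : ℝ} (hc : c < ‖A‖) :
    ∃ x : X, ‖x‖ ≤ 1 ∧ ψ x = ‖ψ x‖ ∧ c < ‖A x‖ := by
  obtain ⟨y, hy, hAy⟩ := A.exists_lt_apply_of_lt_opNorm hc
  obtain ⟨u, hu, hψu⟩ := RCLike.exists_norm_eq_mul_self (ψ y)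
  refine ⟨u • y, ?_, ?_, ?_⟩
  · rw [norm_smul, hu, one_mul]
    exact hy.le
  · rw [map_smul, smul_eq_mul, ← hψu, RCLike.norm_ofReal, abs_norm]
  · rwa [map_smul, norm_smul, hu, one_mul]

theorem norm_sub_lt_of_lt_norm_ofReal_mul_smul_sub {v w : Y} {t r C : ℝ} (ht : 2 ≤ t)
    (hr₀ : 0 ≤ r) (hr₁ : r ≤ 1) (h : t * ‖v‖ - C < ‖((t * r : ℝ) : 𝕜) • v - w‖) :
    t * (1 - r) * ‖v‖ < C + ‖w‖ ∧ ‖v‖ - C < ‖w - v‖ := by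
  have htr : 0 ≤ t * r := mul_nonneg (by linarith) hr₀
  constructor
  · have : ‖((t * r : ℝ) : 𝕜) • v - w‖ ≤ t * r * ‖v‖ + ‖w‖ := by
      grw [norm_sub_le, norm_smul, RCLike.norm_ofReal, abs_of_nonneg htr]
    nlinarith
  · have hdecomp : ((t * r : ℝ) : 𝕜) • v - w = ((t * r - 1 : ℝ) : 𝕜) • v - (w - v) := by
      push_cast
      rw [sub_smul, one_smul]
      abel
    have habs : |t * r - 1| ≤ t - 1 := abs_le.2 ⟨by linarith, by nlinarith⟩
    have : ‖((t * r : ℝ) : 𝕜) • v - w‖ ≤ (t - 1) * ‖v‖ + ‖w - v‖ := by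
      rw [hdecomp]
      grw [norm_sub_le, norm_smul, RCLike.norm_ofReal, habs]
    nlinarith

theorem IsStronglyExposedPoint.exists_isCompactOperator_norm_sub_lt {z : X}
    (hz : IsStronglyExposedPoint 𝕜 z) (S : X →L[𝕜] Y) {ε : ℝ} (hε : 0 ≤ ε)
    (hSz : ε * ‖S‖ < ‖S z‖) :
    ∃ T : X →L[𝕜] Y, IsCompactOperator T ∧ ‖T - S‖ < ‖T‖ - ε * ‖S‖ := by
  obtain ⟨-, ψ, hψ, -, hψexp⟩ := hz
  by_contra! h
  set a := ‖S z‖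
  have ha : 0 < a := (by positivity : 0 ≤ ε * ‖S‖).trans_lt hSz
  let t : ℕ → ℝ := fun n => n + 2
  let T : ℕ → X →L[𝕜] Y := fun n => ψ.smulRight (((t n : ℝ) : 𝕜) • S z)
  have hT n : ‖T n‖ = t n * a := by
    rw [ContinuousLinearMap.norm_smulRight_apply, hψ, one_mul, norm_smul, RCLike.norm_ofReal,
      abs_of_pos (by positivity)]
  have hTS n : t n * a - ε * ‖S‖ ≤ ‖T n - S‖ :=
    hT n ▸ h _ (ψ.isCompactOperator_smulRight_s19 _)
  choose x hx hψx hTSx using fun n => (T n - S).exists_lt_apply_of_lt_opNorm_of_apply_eq_norm ψ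
    (sub_lt_self ‖T n - S‖ (Nat.one_div_pos_of_nat (n := n)))
  set r := fun n => ‖ψ (x n)‖
  have hr n : r n ≤ 1 := (ψ.le_opNorm (x n)).trans (by rw [hψ, one_mul]; exact hx n)
  have hTSx' n : t n * a - (ε * ‖S‖ + 1 / (n + 1)) < ‖((t n * r n : ℝ) : 𝕜) • S z - S (x n)‖ := by
    have : (T n - S) (x n) = ((t n * r n : ℝ) : 𝕜) • S z - S (x n) := by
      rw [sub_apply, ContinuousLinearMap.smulRight_apply, hψx n, smul_smul,
        ← RCLike.ofReal_mul, mul_comm]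
    linarith [hTS n, this ▸ hTSx n]
  have hest n := norm_sub_lt_of_lt_norm_ofReal_mul_smul_sub (by simp [t]) (norm_nonneg _) (hr n)
    (hTSx' n)
  have hr_lim : Tendsto r atTop (𝓝 1) := by
    refine tendsto_one_of_le_one_of_natCast_add_one_mul_one_sub_le
      (K := (ε * ‖S‖ + 1 + ‖S‖) / a) hr fun n => ?_
    rw [le_div_iff₀ ha]
    have : ‖S (x n)‖ ≤ ‖S‖ := S.unit_le_opNorm _ (hx n)
    have : 1 / ((n : ℝ) + 1) ≤ 1 := div_le_one_of_le₀ (by simp) (by positivity)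
    nlinarith [(hest n).1, mul_nonneg (sub_nonneg.2 (hr n)) ha.le]
  have hψx_lim : Tendsto (fun n => ψ (x n)) atTop (𝓝 1) := by
    rw [funext hψx, ← RCLike.ofReal_one]
    exact (RCLike.continuous_ofReal.tendsto 1).comp hr_lim
  have hSx_lim : Tendsto (fun n => ‖S (x n) - S z‖) atTop (𝓝 0) :=
    tendsto_iff_norm_sub_tendsto_zero.1 ((S.continuous.tendsto z).comp (hψexp x hx hψx_lim))
  have : a - ε * ‖S‖ ≤ 0 := by
    have hlim := (tendsto_const_nhds (x := a - ε * ‖S‖)).sub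
      (tendsto_one_div_add_atTop_nhds_zero_nat (𝕜 := ℝ))
    rw [sub_zero] at hlim
    exact le_of_tendsto_of_tendsto' hlim hSx_lim fun n => by linarith [(hest n).2]
  linarith

end

theorem compactOperators_stronglyAntiCoproximinal_of_closedConvexHull_stronglyExposed_general
    {𝕜 X Y : Type*} [RCLike 𝕜]
    [NormedAddCommGroup X] [NormedSpace 𝕜 X]
    [NormedSpace ℝ X] [IsScalarTower ℝ 𝕜 X]
    [NormedAddCommGroup Y] [NormedSpace 𝕜 Y]
    (hconv : closedBall (0 : X) 1 =
      closure (convexHull ℝ {z : X | IsStronglyExposedPoint 𝕜 z})) :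
    ∀ S : X →L[𝕜] Y, S ≠ 0 → ∀ ε : ℝ, 0 ≤ ε → ε < 1 →
      ∃ T : X →L[𝕜] Y, IsCompactOperator T ∧
        ¬ ∀ lam : 𝕜, ‖T‖ - ε * ‖lam • S‖ ≤ ‖T + lam • S‖ := by
  intro S hS ε hε₀ hε₁
  have hεS : ε * ‖S‖ < ‖S‖ := mul_lt_of_lt_one_left (norm_pos_iff.2 hS) hε₁
  obtain ⟨z, hz, hSz⟩ := exists_mem_lt_norm_apply_of_closedBall_eq_closure_convexHull hconv S hεS
  obtain ⟨T, hT, hTS⟩ := hz.exists_isCompactOperator_norm_sub_lt S hε₀ hSz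
  refine ⟨T, hT, fun h => ?_⟩
  have h₁ := h (-1)
  rw [neg_one_smul, norm_neg, ← sub_eq_add_neg] at h₁
  linarith

/-- Let `X, Y` be Banach spaces such that `B_X` is the closed convex hull
of its strongly exposed points. If some bounded operator `X → Y` is not compact, then the
compact operators are strongly anti-coproximinal in `L(X, Y)`: for every nonzero `S` and
every `ε ∈ [0,1)` there is a compact operator `T` with `¬(T ⊥_B^ε S)`. -/
theorem compactOperators_stronglyAntiCoproximinal_of_closedConvexHull_stronglyExposed
    {𝕜 X Y : Type*} [RCLike 𝕜]
    [NormedAddCommGroup X] [NormedSpace 𝕜 X] [CompleteSpace X]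
    [NormedSpace ℝ X] [IsScalarTower ℝ 𝕜 X]
    [NormedAddCommGroup Y] [NormedSpace 𝕜 Y] [CompleteSpace Y]
    (hconv : closedBall (0 : X) 1 =
      closure (convexHull ℝ {z : X | IsStronglyExposedPoint 𝕜 z}))
    (hnc : ∃ S₀ : X →L[𝕜] Y, ¬ IsCompactOperator S₀) :
    ∀ S : X →L[𝕜] Y, S ≠ 0 → ∀ ε : ℝ, 0 ≤ ε → ε < 1 →
      ∃ T : X →L[𝕜] Y, IsCompactOperator T ∧
        ¬ ∀ lam : 𝕜, ‖T‖ - ε * ‖lam • S‖ ≤ ‖T + lam • S‖ :=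
  compactOperators_stronglyAntiCoproximinal_of_closedConvexHull_stronglyExposed_general hconv
end
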